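/- arXiv:1505.00156 — 5 statements merged into one kernel-verified Lean document; each statement's English description precedes it below -/
import Mathlib

section
/- Let X be a real Banach space, {S(t)}_{t≥0} a compact C0 semigroup on X, Λ a metric space, and F:Λ×[0,∞)×X→X a continuous map satisfying conditions (F1) and (F2). Then for every t>0 and every bounded set V⊆X, the set { u(t) : λ∈Λ, u a mild solution of u̇=−Au+F(λ,t,u) with u(0)∈V } is relatively compact in X. -/
/-!
Fix `0 < ε ≤ t`. By the semigroup law a mild solution restarts at time `t - ε`:
`u t = S ε (u (t - ε)) + ∫ s in t - ε..t, S (t - s) (F s (u s))`.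
Grönwall's inequality applied to the variation of constants formula and the linear growth (F2)
bounds `‖u s‖` on `[0, t]` uniformly over all solutions starting in `V` and all parameters.
So the first term lies in the image under the compact operator `S ε` of a fixed ball, and the
integral has norm `O(ε)`. The set of values `u t` is therefore within `O(ε)` of a relatively
compact set for every `ε`, hence totally bounded.
-/

open MeasureTheory Set Filter Topology Bornology intervalIntegral

/-- A mild solution of `u' = -Au + G(t,u)` (with `-A` generating the semigroup `S`):
a continuous map `u : [0,∞) → X` satisfying the variation of constants formula. -/
def IsMildSol {X : Type*} [NormedAddCommGroup X] [NormedSpace ℝ X] [CompleteSpace X]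
    (S : ℝ → X →L[ℝ] X) (G : ℝ → X → X) (u : ℝ → X) : Prop :=
  ContinuousOn u (Set.Ici (0 : ℝ)) ∧
  ∀ t : ℝ, 0 ≤ t → u t = S t (u 0) + ∫ s in (0:ℝ)..t, S (t - s) (G s (u s))

theorem add_mul_gronwallBound_zero (A K x : ℝ) :
    A + K * gronwallBound 0 K A x = A * Real.exp (K * x) := by
  rcases eq_or_ne K 0 with rfl | hK
  · simp [gronwallBound_K0]
  · rw [gronwallBound_of_K_ne_0 hK]
    field_simp
    ring

theorem le_mul_exp_of_le_add_integral {f : ℝ → ℝ} {a b A K : ℝ} (hf : ContinuousOn f (Icc a b))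
    (hK : 0 ≤ K) (h : ∀ s ∈ Icc a b, f s ≤ A + K * ∫ r in a..s, f r) :
    ∀ s ∈ Icc a b, f s ≤ A * Real.exp (K * (s - a)) := by
  set ψ : ℝ → ℝ := fun s => ∫ r in a..s, f r
  have hψ_cont : ContinuousOn ψ (Icc a b) := by
    rcases le_or_gt a b with hab | hab
    · have := continuousOn_primitive_interval (μ := volume)
        (hf.integrableOn_Icc.mono_set (uIcc_of_le hab).subset)
      rwa [uIcc_of_le hab] at this
    · simp [Icc_eq_empty_of_lt hab]
  have hψ_deriv : ∀ x ∈ Ico a b, HasDerivWithinAt ψ (f x) (Ici x) x := by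
    intro x hx
    have hIcc : Icc a b ∈ 𝓝[>] x := Icc_mem_nhdsGT_of_mem ⟨hx.1, hx.2⟩
    exact integral_hasDerivWithinAt_right
      ((hf.mono (Icc_subset_Icc le_rfl hx.2.le)).intervalIntegrable_of_Icc hx.1)
      ((hf.stronglyMeasurableAtFilter_nhdsWithin measurableSet_Icc x).filter_mono
        (nhdsWithin_le_of_mem hIcc))
      ((hf x (Ico_subset_Icc_self hx)).mono_of_mem_nhdsWithin hIcc)
  have hψ_le : ∀ s ∈ Icc a b, ψ s ≤ gronwallBound 0 K A (s - a) :=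
    le_gronwallBound_of_liminf_deriv_right_le hψ_cont
      (fun x hx _ hr => (hψ_deriv x hx).liminf_right_slope_le hr) (by simp [ψ])
      (fun x hx => by linarith [h x (Ico_subset_Icc_self hx)])
  intro s hs
  calc f s ≤ A + K * ψ s := h s hs
    _ ≤ A + K * gronwallBound 0 K A (s - a) := by gcongr; exact hψ_le s hs
    _ = A * Real.exp (K * (s - a)) := add_mul_gronwallBound_zero A K (s - a)

theorem IsCompact.exists_forall_norm_le_of_continuousOn_apply {α E F : Type*} [TopologicalSpace α]
    [NormedAddCommGroup E] [NormedSpace ℝ E] [CompleteSpace E]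
    [NormedAddCommGroup F] [NormedSpace ℝ F]
    {K : Set α} (hK : IsCompact K) {T : α → E →L[ℝ] F}
    (hT : ∀ x, ContinuousOn (fun a => T a x) K) : ∃ M, ∀ a ∈ K, ‖T a‖ ≤ M := by
  obtain ⟨M, hM⟩ := banach_steinhaus (g := fun a : K => T a) fun x => by
    obtain ⟨C, hC⟩ := hK.exists_bound_of_continuousOn (hT x)
    exact ⟨C, fun a => hC a a.2⟩
  exact ⟨M, fun a ha => hM ⟨a, ha⟩⟩

theorem continuousWithinAt_clm_apply_of_eventually_norm_le {α E F : Type*} [TopologicalSpace α]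
    [NormedAddCommGroup E] [NormedSpace ℝ E] [NormedAddCommGroup F] [NormedSpace ℝ F]
    {T : α → E →L[ℝ] F} {s : Set α} {a : α} (x : E)
    (hT : ∀ y, ContinuousWithinAt (fun b => T b y) s a) {M : ℝ}
    (hM : ∀ᶠ b in 𝓝[s] a, ‖T b‖ ≤ M) :
    ContinuousWithinAt (fun p : α × E => T p.1 p.2) (s ×ˢ univ) (a, x) := by
  have hfst : Tendsto Prod.fst (𝓝[s ×ˢ univ] (a, x)) (𝓝[s] a) := by
    simpa [nhdsWithin_prod_eq] using tendsto_fst (f := 𝓝[s] a) (g := 𝓝[univ] x)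
  have hsnd : Tendsto (fun p : α × E => ‖p.2 - x‖) (𝓝[s ×ˢ univ] (a, x)) (𝓝 0) := by
    have h : Continuous fun p : α × E => ‖p.2 - x‖ := by fun_prop
    simpa using (h.tendsto (a, x)).mono_left nhdsWithin_le_nhds
  have hx := tendsto_iff_norm_sub_tendsto_zero.1 ((hT x).tendsto.comp hfst)
  rw [ContinuousWithinAt, tendsto_iff_norm_sub_tendsto_zero]
  refine squeeze_zero_norm' ?_ (by simpa using (hsnd.const_mul M).add hx)
  filter_upwards [hfst.eventually hM] with p hp
  rw [norm_norm]
  calc ‖T p.1 p.2 - T a x‖ = ‖T p.1 (p.2 - x) + (T p.1 x - T a x)‖ := by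
        rw [map_sub]; abel_nf
    _ ≤ ‖T p.1‖ * ‖p.2 - x‖ + ‖T p.1 x - T a x‖ :=
        (norm_add_le _ _).trans (by gcongr; exact (T p.1).le_opNorm _)
    _ ≤ M * ‖p.2 - x‖ + ‖(fun b => T b x) p.1 - T a x‖ := by gcongr

section Semigroup

variable {X : Type*} [NormedAddCommGroup X] [NormedSpace ℝ X] [CompleteSpace X]
  {S : ℝ → X →L[ℝ] X}

theorem continuousOn_semigroup_uncurry (hScont : ∀ x, ContinuousOn (fun t => S t x) (Ici 0)) :
    ContinuousOn (fun p : ℝ × X => S p.1 p.2) (Ici 0 ×ˢ univ) := by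
  rintro ⟨r, x⟩ ⟨hr, -⟩
  obtain ⟨M, hM⟩ := isCompact_Icc.exists_forall_norm_le_of_continuousOn_apply
    (K := Icc 0 (r + 1)) fun y => (hScont y).mono Icc_subset_Ici_self
  refine continuousWithinAt_clm_apply_of_eventually_norm_le x (fun y => hScont y r hr) (M := M) ?_
  filter_upwards [self_mem_nhdsWithin, nhdsWithin_le_nhds (eventually_lt_nhds (lt_add_one r))]
    with r' hr'0 hr'
  exact hM r' ⟨hr'0, hr'.le⟩

theorem continuousOn_semigroup_sub_apply (hScont : ∀ x, ContinuousOn (fun t => S t x) (Ici 0))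
    {g : ℝ → X} (hg : ContinuousOn g (Ici 0)) (τ : ℝ) :
    ContinuousOn (fun s => S (τ - s) (g s)) (Icc 0 τ) :=
  (continuousOn_semigroup_uncurry hScont).comp
    ((continuousOn_const.sub continuousOn_id).prodMk (hg.mono Icc_subset_Ici_self))
    fun _ hs => ⟨sub_nonneg.2 hs.2, trivial⟩

theorem intervalIntegrable_semigroup_sub_apply
    (hScont : ∀ x, ContinuousOn (fun t => S t x) (Ici 0))
    {g : ℝ → X} (hg : ContinuousOn g (Ici 0)) {τ a b : ℝ} (ha : a ∈ Icc 0 τ) (hb : b ∈ Icc 0 τ) :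
    IntervalIntegrable (fun s => S (τ - s) (g s)) volume a b :=
  ((continuousOn_semigroup_sub_apply hScont hg τ).mono (uIcc_subset_Icc ha hb)).intervalIntegrable

end Semigroup

namespace IsMildSol

variable {X : Type*} [NormedAddCommGroup X] [NormedSpace ℝ X] [CompleteSpace X]
  {S : ℝ → X →L[ℝ] X} {G : ℝ → X → X} {u : ℝ → X}

theorem apply_add (hu : IsMildSol S G u) (hG : ContinuousOn (fun s => G s (u s)) (Ici 0))
    (hSadd : ∀ t s : ℝ, 0 ≤ t → 0 ≤ s → S (t + s) = (S t).comp (S s))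
    (hScont : ∀ x, ContinuousOn (fun t => S t x) (Ici 0)) {a b : ℝ} (ha : 0 ≤ a) (hb : 0 ≤ b) :
    u (a + b) = S b (u a) + ∫ s in a..a + b, S (a + b - s) (G s (u s)) := by
  have hab : 0 ≤ a + b := add_nonneg ha hb
  have hsplit := integral_add_adjacent_intervals
    (intervalIntegrable_semigroup_sub_apply hScont hG (τ := a + b) (a := 0) (b := a)
      ⟨le_rfl, hab⟩ ⟨ha, le_add_of_nonneg_right hb⟩)
    (intervalIntegrable_semigroup_sub_apply hScont hG ⟨ha, le_add_of_nonneg_right hb⟩ ⟨hab, le_rfl⟩)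
  have hS : ∀ r, 0 ≤ r → S (b + r) = (S b).comp (S r) := fun r hr => hSadd b r hb hr
  have hhead : ∫ s in (0 : ℝ)..a, S (a + b - s) (G s (u s))
      = S b (∫ s in (0 : ℝ)..a, S (a - s) (G s (u s))) := by
    rw [← (S b).intervalIntegral_comp_comm
      (intervalIntegrable_semigroup_sub_apply hScont hG ⟨le_rfl, ha⟩ ⟨ha, le_rfl⟩)]
    refine integral_congr fun s hs => ?_
    rw [uIcc_of_le ha] at hs
    simp only [show a + b - s = b + (a - s) by ring, hS _ (sub_nonneg.2 hs.2),
      ContinuousLinearMap.comp_apply]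
  rw [hu.2 _ hab, ← hsplit, hhead, hu.2 a ha, map_add, add_comm a b, hS a ha,
    ContinuousLinearMap.comp_apply, add_assoc]

theorem norm_sub_semigroup_apply_le (hu : IsMildSol S G u)
    (hG : ContinuousOn (fun s => G s (u s)) (Ici 0))
    (hSadd : ∀ t s : ℝ, 0 ≤ t → 0 ≤ s → S (t + s) = (S t).comp (S s))
    (hScont : ∀ x, ContinuousOn (fun t => S t x) (Ici 0)) {a b M B : ℝ} (ha : 0 ≤ a) (hb : 0 ≤ b)
    (hM : ∀ r ∈ Icc 0 b, ‖S r‖ ≤ M) (hB : ∀ s ∈ Icc a (a + b), ‖G s (u s)‖ ≤ B) :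
    ‖u (a + b) - S b (u a)‖ ≤ M * B * b := by
  rw [hu.apply_add hG hSadd hScont ha hb, add_sub_cancel_left]
  have hbound : ∀ s ∈ uIoc a (a + b), ‖S (a + b - s) (G s (u s))‖ ≤ M * B := by
    intro s hs
    rw [uIoc_of_le (le_add_of_nonneg_right hb)] at hs
    have hSs := hM (a + b - s) ⟨by linarith [hs.2], by linarith [hs.1]⟩
    calc ‖S (a + b - s) (G s (u s))‖ ≤ ‖S (a + b - s)‖ * ‖G s (u s)‖ := (S _).le_opNorm _
      _ ≤ M * B := mul_le_mul hSs (hB s (Ioc_subset_Icc_self hs)) (norm_nonneg _)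
          ((norm_nonneg _).trans hSs)
  simpa [abs_of_nonneg hb] using norm_integral_le_of_norm_le_const hbound

theorem one_add_norm_le (hu : IsMildSol S G u) {T M C : ℝ} (hM : ∀ r ∈ Icc 0 T, ‖S r‖ ≤ M)
    (hG : ∀ s ∈ Icc 0 T, ‖G s (u s)‖ ≤ C * (1 + ‖u s‖)) :
    ∀ s ∈ Icc 0 T, 1 + ‖u s‖ ≤ (1 + M * ‖u 0‖) * Real.exp (M * C * s) := by
  intro s hs
  have h0T : (0 : ℝ) ∈ Icc 0 T := ⟨le_rfl, hs.1.trans hs.2⟩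
  have hM0 : 0 ≤ M := (norm_nonneg _).trans (hM 0 h0T)
  have hC0 : 0 ≤ C :=
    nonneg_of_mul_nonneg_left ((norm_nonneg _).trans (hG 0 h0T)) (by positivity)
  have hcont : ContinuousOn (fun r => 1 + ‖u r‖) (Icc 0 T) :=
    continuousOn_const.add (hu.1.mono Icc_subset_Ici_self).norm
  have hintegral : ∀ τ ∈ Icc 0 T,
      1 + ‖u τ‖ ≤ (1 + M * ‖u 0‖) + M * C * ∫ r in (0 : ℝ)..τ, 1 + ‖u r‖ := by
    intro τ hτ
    have hint : IntervalIntegrable (fun r => M * C * (1 + ‖u r‖)) volume 0 τ :=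
      ((hcont.mono (Icc_subset_Icc_right hτ.2)).intervalIntegrable_of_Icc hτ.1).const_mul _
    have hduhamel : ‖∫ r in (0 : ℝ)..τ, S (τ - r) (G r (u r))‖
        ≤ ∫ r in (0 : ℝ)..τ, M * C * (1 + ‖u r‖) := by
      refine intervalIntegral.norm_integral_le_of_norm_le hτ.1
        (Eventually.of_forall fun r hr => ?_) hint
      have hSr := hM (τ - r) ⟨by linarith [hr.2], by linarith [hr.1, hτ.2]⟩
      calc ‖S (τ - r) (G r (u r))‖ ≤ ‖S (τ - r)‖ * ‖G r (u r)‖ := (S _).le_opNorm _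
        _ ≤ M * (C * (1 + ‖u r‖)) :=
            mul_le_mul hSr (hG r ⟨hr.1.le, hr.2.trans hτ.2⟩) (norm_nonneg _) hM0
        _ = M * C * (1 + ‖u r‖) := by ring
    have hinit : ‖S τ (u 0)‖ ≤ M * ‖u 0‖ :=
      ((S τ).le_opNorm _).trans (by gcongr; exact hM τ hτ)
    rw [intervalIntegral.integral_const_mul] at hduhamel
    have := norm_add_le (S τ (u 0)) (∫ r in (0 : ℝ)..τ, S (τ - r) (G r (u r)))
    rw [← hu.2 τ hτ.1] at this
    linarith
  simpa using le_mul_exp_of_le_add_integral hcont (by positivity) hintegral s hs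

end IsMildSol

theorem Metric.totallyBounded_of_forall_exists_dist_lt {α : Type*} [PseudoMetricSpace α]
    {s : Set α} (h : ∀ δ > 0, ∃ t, TotallyBounded t ∧ ∀ x ∈ s, ∃ y ∈ t, dist x y < δ) :
    TotallyBounded s := by
  refine Metric.totallyBounded_iff.2 fun δ hδ => ?_
  obtain ⟨t, ht, hst⟩ := h (δ / 2) (half_pos hδ)
  obtain ⟨N, hN, htN⟩ := Metric.totallyBounded_iff.1 ht (δ / 2) (half_pos hδ)
  refine ⟨N, hN, fun x hx => ?_⟩
  obtain ⟨y, hy, hxy⟩ := hst x hx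
  obtain ⟨z, hz, hyz⟩ := mem_iUnion₂.1 (htN hy)
  refine mem_iUnion₂.2 ⟨z, hz, Metric.mem_ball.2 ?_⟩
  linarith [dist_triangle x y z, Metric.mem_ball.1 hyz]

theorem isCompact_closure_of_forall_norm_sub_semigroup_le {X : Type*} [NormedAddCommGroup X]
    [NormedSpace ℝ X] [CompleteSpace X] {S : ℝ → X →L[ℝ] X}
    (hScomp : ∀ t : ℝ, 0 < t → ∀ B : Set X, IsBounded B → IsCompact (closure (S t '' B)))
    {Y : Set X} {t D B : ℝ} (ht : 0 < t)
    (hY : ∀ y ∈ Y, ∀ ε ∈ Ioc 0 t, ∃ x, ‖x‖ ≤ D ∧ ‖y - S ε x‖ ≤ B * ε) :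
    IsCompact (closure Y) := by
  refine (TotallyBounded.closure ?_).isCompact_of_isClosed isClosed_closure
  refine Metric.totallyBounded_of_forall_exists_dist_lt fun δ hδ => ?_
  set ε := min t (δ / (|B| + 1))
  have hε : ε ∈ Ioc 0 t := ⟨lt_min ht (by positivity), min_le_left _ _⟩
  refine ⟨S ε '' Metric.closedBall 0 D,
    (hScomp ε hε.1 _ Metric.isBounded_closedBall).totallyBounded.subset subset_closure,
    fun y hy => ?_⟩
  obtain ⟨x, hxD, hxy⟩ := hY y hy ε hε
  refine ⟨S ε x, ⟨x, mem_closedBall_zero_iff.2 hxD, rfl⟩, ?_⟩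
  calc dist y (S ε x) ≤ |B| * ε := by
        rw [dist_eq_norm]; exact hxy.trans (by gcongr; exact le_abs_self B)
    _ ≤ |B| * (δ / (|B| + 1)) := by gcongr; exact min_le_right _ _
    _ < δ := by
        rw [mul_div_assoc', div_lt_iff₀ (by positivity)]
        nlinarith

theorem statement3_general
    {X : Type*} [NormedAddCommGroup X] [NormedSpace ℝ X] [CompleteSpace X]
    {Λ : Type*} [MetricSpace Λ]
    (S : ℝ → X →L[ℝ] X)
    (hSadd : ∀ t s : ℝ, 0 ≤ t → 0 ≤ s → S (t + s) = (S t).comp (S s))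
    (hScont : ∀ x : X, ContinuousOn (fun t => S t x) (Set.Ici (0:ℝ)))
    (hScomp : ∀ t : ℝ, 0 < t → ∀ B : Set X, Bornology.IsBounded B →
      IsCompact (closure (S t '' B)))
    (F : Λ → ℝ → X → X)
    (hFcont : ContinuousOn (fun p : Λ × ℝ × X => F p.1 p.2.1 p.2.2)
      {p : Λ × ℝ × X | 0 ≤ p.2.1})
    (c : ℝ → ℝ) (hc : Continuous c)
    (hF2 : ∀ (l : Λ) (t : ℝ) (x : X), 0 ≤ t → ‖F l t x‖ ≤ c t * (1 + ‖x‖))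
    (V : Set X) (hV : Bornology.IsBounded V)
    (t : ℝ) (ht : 0 < t) :
    IsCompact (closure {y : X | ∃ (l : Λ) (u : ℝ → X),
      IsMildSol S (F l) u ∧ u 0 ∈ V ∧ y = u t}) := by
  obtain ⟨M, hM⟩ := isCompact_Icc.exists_forall_norm_le_of_continuousOn_apply
    (K := Icc 0 t) fun x => (hScont x).mono Icc_subset_Ici_self
  obtain ⟨R, hR⟩ := hV.exists_norm_le
  obtain ⟨C, hC⟩ := (isCompact_Icc (a := 0) (b := t)).exists_bound_of_continuousOn hc.continuousOn
  have hM0 : 0 ≤ M := (norm_nonneg _).trans (hM 0 ⟨le_rfl, ht.le⟩)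
  have hC0 : 0 ≤ C := (norm_nonneg _).trans (hC 0 ⟨le_rfl, ht.le⟩)
  set E := (1 + M * R) * Real.exp (M * C * t)
  have hFC : ∀ l (x : X), ∀ s ∈ Icc 0 t, ‖F l s x‖ ≤ C * (1 + ‖x‖) := fun l x s hs =>
    (hF2 l s x hs.1).trans (by gcongr; exact (le_abs_self _).trans (hC s hs))
  have hE : ∀ l u, IsMildSol S (F l) u → u 0 ∈ V → ∀ s ∈ Icc 0 t, 1 + ‖u s‖ ≤ E :=
    fun l u hu hu0 s hs => (hu.one_add_norm_le hM (fun r hr => hFC l _ r hr) s hs).trans <| by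
      have hR0 : 0 ≤ R := (norm_nonneg _).trans (hR _ hu0)
      unfold E
      gcongr
      exacts [hR _ hu0, hs.2]
  refine isCompact_closure_of_forall_norm_sub_semigroup_le hScomp (D := E) (B := M * (C * E)) ht ?_
  rintro _ ⟨l, u, hu, hu0, rfl⟩ ε ⟨hε, hεt⟩
  have hG : ContinuousOn (fun s => F l s (u s)) (Ici 0) :=
    hFcont.comp (continuousOn_const.prodMk (continuousOn_id.prodMk hu.1)) fun _ hs => hs
  have hnorm := hu.norm_sub_semigroup_apply_le hG hSadd hScont (sub_nonneg.2 hεt) hε.le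
    (fun r hr => hM r ⟨hr.1, hr.2.trans hεt⟩) (B := C * E) fun s hs => by
      have hs' : s ∈ Icc 0 t := ⟨(sub_nonneg.2 hεt).trans hs.1, by linarith [hs.2]⟩
      exact (hFC l _ s hs').trans (by gcongr; exact hE l u hu hu0 s hs')
  rw [sub_add_cancel] at hnorm
  refine ⟨u (t - ε), ?_, hnorm⟩
  linarith [hE l u hu hu0 (t - ε) ⟨sub_nonneg.2 hεt, by linarith⟩]

/-- for a compact `C₀` semigroup, the set of time-`t` values of
mild solutions starting in a bounded set `V`, over all parameters `λ ∈ Λ`, is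
relatively compact in `X`. -/
theorem statement3
    {X : Type*} [NormedAddCommGroup X] [NormedSpace ℝ X] [CompleteSpace X]
    {Λ : Type*} [MetricSpace Λ]
    (S : ℝ → X →L[ℝ] X)
    (hS0 : S 0 = 1)
    (hSadd : ∀ t s : ℝ, 0 ≤ t → 0 ≤ s → S (t + s) = (S t).comp (S s))
    (hScont : ∀ x : X, ContinuousOn (fun t => S t x) (Set.Ici (0:ℝ)))
    (hScomp : ∀ t : ℝ, 0 < t → ∀ B : Set X, Bornology.IsBounded B →
      IsCompact (closure (S t '' B)))
    (F : Λ → ℝ → X → X)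
    (hFcont : ContinuousOn (fun p : Λ × ℝ × X => F p.1 p.2.1 p.2.2)
      {p : Λ × ℝ × X | 0 ≤ p.2.1})
    (hF1 : ∀ (l : Λ) (x₀ : X), ∃ W ∈ nhds x₀, ∃ L : ℝ, 0 < L ∧
      ∀ x ∈ W, ∀ y ∈ W, ∀ t : ℝ, 0 ≤ t → ‖F l t x - F l t y‖ ≤ L * ‖x - y‖)
    (c : ℝ → ℝ) (hc : Continuous c) (hc0 : ∀ t : ℝ, 0 ≤ t → 0 ≤ c t)
    (hF2 : ∀ (l : Λ) (t : ℝ) (x : X), 0 ≤ t → ‖F l t x‖ ≤ c t * (1 + ‖x‖))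
    (V : Set X) (hV : Bornology.IsBounded V)
    (t : ℝ) (ht : 0 < t) :
    IsCompact (closure {y : X | ∃ (l : Λ) (u : ℝ → X),
      IsMildSol S (F l) u ∧ u 0 ∈ V ∧ y = u t}) :=
  statement3_general S hSadd hScont hScomp F hFcont c hc hF2 V hV t ht
end

section
/- Let X be a real Banach space, T>0, and {S(t)}_{t≥0} a compact C0 semigroup on X. Let N := {x∈X : S(T)x = x} be nonzero, suppose S(t)x = x for every x∈N and t≥0, and let M be a closed subspace with X = N ⊕ M and S(t)M ⊆ M for all t≥0; let P be the projection onto N along M and Q = I − P. Let F:[0,∞)×X→X be continuous satisfying (F1) and (F2), and define g:N→N by g(x) := ∫₀ᵀ P F(s,x) ds. Let U⊆N be open bounded in N and V⊆M open bounded in M with 0∈V, and assume g(x)≠0 for every x in the boundary ∂_N U of U in N. Then there exists ε₀∈(0,1) such that for every ε∈(0,ε₀], every s∈[0,1], and every x in the boundary of U⊕V in X, there is no continuous map u:[0,T]→X with u(T)=x and u(t) = S(t)x + ∫₀ᵗ S(t−τ)[ ε P F(τ, s·u(τ) + (1−s)Px) + ε s Q F(τ,u(τ)) ] dτ for all t∈[0,T].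 -/
/-!
If the claim failed for every `ε₀`, there would be solutions `uₙ` for parameters `εₙ → 0`
through points `xₙ ∈ ∂(U ⊕ V)`. The forcing term is `O(εₙ (1 + ‖uₙ‖))`, so an a priori bound
keeps `uₙ` within `O(εₙ)` of the orbit `t ↦ S(t) xₙ`; in particular `xₙ - S(T) xₙ → 0`, and
compactness of `S(T)` yields a subsequence `xₙ → z` with `S(T) z = z`, i.e. `z ∈ N`. Since `0`
is an interior point of `V`, a point of `N ∩ ∂(U ⊕ V)` lies in `∂_N U`. Applying `P` to the
equation at `t = T` (where `P S(t) = P` and `P Q = 0`) and dividing by `εₙ` gives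
`∫₀ᵀ P F(τ, sₙ uₙ(τ) + (1 - sₙ) P xₙ) dτ = 0`, and dominated convergence turns this into
`g(z) = 0`, contradicting the hypothesis on `∂_N U`.
-/

open MeasureTheory Set Filter Topology Bornology intervalIntegral
open scoped Pointwise

section StronglyContinuous

variable {α E F : Type*} [TopologicalSpace α] [NormedAddCommGroup E] [NormedSpace ℝ E]
  [NormedAddCommGroup F] [NormedSpace ℝ F] {S : α → E →L[ℝ] F} {s : Set α}

theorem IsCompact.exists_opNorm_le [CompleteSpace E] (hs : IsCompact s)
    (hS : ∀ x, ContinuousOn (fun a => S a x) s) : ∃ K, 0 ≤ K ∧ ∀ a ∈ s, ‖S a‖ ≤ K := by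
  have hpt : ∀ x, ∃ C, ∀ a : s, ‖S a x‖ ≤ C := fun x =>
    let ⟨C, hC⟩ := hs.exists_bound_of_continuousOn (hS x)
    ⟨C, fun a => hC a a.2⟩
  obtain ⟨C, hC⟩ := banach_steinhaus hpt
  exact ⟨max C 0, le_max_right _ _, fun a ha => (hC ⟨a, ha⟩).trans (le_max_left _ _)⟩

theorem ContinuousOn.clm_apply_of_opNorm_le {G : α → E} {K : ℝ}
    (hS : ∀ x, ContinuousOn (fun a => S a x) s) (hK : ∀ a ∈ s, ‖S a‖ ≤ K)
    (hG : ContinuousOn G s) : ContinuousOn (fun a => S a (G a)) s := by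
  intro a₀ ha₀
  have hsmall : Tendsto (fun a => S a (G a - G a₀)) (𝓝[s] a₀) (𝓝 0) := by
    refine squeeze_zero_norm' ?_ (by simpa using ((hG a₀ ha₀).sub_const (G a₀)).norm.const_mul K)
    filter_upwards [self_mem_nhdsWithin] with a ha
    exact (S a).le_of_opNorm_le (hK a ha) _
  simpa [ContinuousWithinAt] using hsmall.add (hS (G a₀) a₀ ha₀)

end StronglyContinuous

section MildSolution

variable {X : Type*} [NormedAddCommGroup X] [NormedSpace ℝ X] {S : ℝ → X →L[ℝ] X}
  {u f : ℝ → X} {x : X} {K T : ℝ}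

theorem norm_integral_semigroup_le {b t : ℝ} (hK : ∀ r ∈ Icc 0 T, ‖S r‖ ≤ K)
    (hf : ∀ τ ∈ Icc 0 T, ‖f τ‖ ≤ b) (ht : t ∈ Icc 0 T) :
    ‖∫ τ in 0..t, S (t - τ) (f τ)‖ ≤ K * b * T := by
  have h0 : (0 : ℝ) ∈ Icc 0 T := ⟨le_rfl, ht.1.trans ht.2⟩
  have hKb : 0 ≤ K * b :=
    mul_nonneg ((norm_nonneg _).trans (hK 0 h0)) ((norm_nonneg _).trans (hf 0 h0))
  calc ‖∫ τ in 0..t, S (t - τ) (f τ)‖ ≤ K * b * |t - 0| := by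
        refine norm_integral_le_of_norm_le_const fun τ hτ => ?_
        rw [uIoc_of_le ht.1] at hτ
        exact (S _).le_of_opNorm_le_of_le (hK _ ⟨by linarith [hτ.2], by linarith [hτ.1, ht.2]⟩)
          (hf τ ⟨hτ.1.le, hτ.2.trans ht.2⟩)
    _ ≤ K * b * T := by
        rw [sub_zero, abs_of_nonneg ht.1]
        exact mul_le_mul_of_nonneg_left ht.2 hKb

/-- Evaluate the equation where `‖u‖` is maximal and absorb the integral term into the
left-hand side. -/
theorem norm_le_of_eq_semigroup_add_integral {η : ℝ} (hK : ∀ r ∈ Icc 0 T, ‖S r‖ ≤ K)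
    (hu : ContinuousOn u (Icc 0 T))
    (hueq : ∀ t ∈ Icc 0 T, u t = S t x + ∫ τ in 0..t, S (t - τ) (f τ))
    (hf : ∀ τ ∈ Icc 0 T, ‖f τ‖ ≤ η * (1 + ‖u τ‖)) (hη : T * K * η ≤ 1 / 2) {R : ℝ}
    (hx : ‖x‖ ≤ R) : ∀ t ∈ Icc 0 T, ‖u t‖ ≤ 2 * K * R + 1 := by
  intro t ht
  obtain ⟨t₀, ht₀, hmax⟩ := isCompact_Icc.exists_isMaxOn ⟨t, ht⟩ hu.norm
  have h0 : (0 : ℝ) ∈ Icc 0 T := ⟨le_rfl, ht.1.trans ht.2⟩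
  have hη0 : 0 ≤ η := by
    have := (norm_nonneg _).trans (hf 0 h0)
    exact nonneg_of_mul_nonneg_left this (by positivity)
  have hf' : ∀ τ ∈ Icc 0 T, ‖f τ‖ ≤ η * (1 + ‖u t₀‖) := fun τ hτ =>
    (hf τ hτ).trans (by gcongr; exact hmax hτ)
  have hK0 : 0 ≤ K := (norm_nonneg _).trans (hK 0 h0)
  have hbound : ‖u t₀‖ ≤ K * R + K * (η * (1 + ‖u t₀‖)) * T := by
    calc ‖u t₀‖ = ‖S t₀ x + ∫ τ in 0..t₀, S (t₀ - τ) (f τ)‖ := by rw [← hueq t₀ ht₀]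
      _ ≤ _ := norm_add_le_of_le ((S t₀).le_of_opNorm_le_of_le (hK t₀ ht₀) hx)
          (norm_integral_semigroup_le hK hf' ht₀)
  have hKR : 0 ≤ K * R := mul_nonneg hK0 ((norm_nonneg _).trans hx)
  have : ‖u t₀‖ ≤ 2 * K * R + 1 := by nlinarith [norm_nonneg (u t₀)]
  exact (hmax ht).trans this

theorem norm_sub_semigroup_le_of_eq_semigroup_add_integral {η : ℝ}
    (hK : ∀ r ∈ Icc 0 T, ‖S r‖ ≤ K) (hu : ContinuousOn u (Icc 0 T))
    (hueq : ∀ t ∈ Icc 0 T, u t = S t x + ∫ τ in 0..t, S (t - τ) (f τ))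
    (hf : ∀ τ ∈ Icc 0 T, ‖f τ‖ ≤ η * (1 + ‖u τ‖)) (hη : T * K * η ≤ 1 / 2) {R : ℝ}
    (hx : ‖x‖ ≤ R) : ∀ t ∈ Icc 0 T, ‖u t - S t x‖ ≤ K * (η * (2 + 2 * K * R)) * T := by
  intro t ht
  have hub := norm_le_of_eq_semigroup_add_integral hK hu hueq hf hη hx
  have hη0 : 0 ≤ η := by
    have := (norm_nonneg _).trans (hf t ht)
    exact nonneg_of_mul_nonneg_left this (by positivity)
  have hf' : ∀ τ ∈ Icc 0 T, ‖f τ‖ ≤ η * (2 + 2 * K * R) := fun τ hτ =>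
    (hf τ hτ).trans (mul_le_mul_of_nonneg_left (by linarith [hub τ hτ]) hη0)
  rw [hueq t ht, add_sub_cancel_left]
  exact norm_integral_semigroup_le hK hf' ht

theorem integral_map_eq_zero_of_eq_semigroup_add_integral [CompleteSpace X] {P : X →L[ℝ] X}
    (hT : 0 ≤ T) (hScont : ∀ x : X, ContinuousOn (fun t => S t x) (Ici 0))
    (hK : ∀ r ∈ Icc 0 T, ‖S r‖ ≤ K) (hPS : ∀ t, 0 ≤ t → ∀ x, P (S t x) = P x)
    (hf : ContinuousOn f (Icc 0 T)) (hx : x = S T x + ∫ τ in 0..T, S (T - τ) (f τ)) :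
    ∫ τ in 0..T, P (f τ) = 0 := by
  have hrev : MapsTo (fun τ => T - τ) (Icc 0 T) (Icc 0 T) := fun τ hτ =>
    ⟨by linarith [hτ.2], by linarith [hτ.1]⟩
  have hint : IntervalIntegrable (fun τ => S (T - τ) (f τ)) volume 0 T := by
    refine ContinuousOn.intervalIntegrable ?_
    rw [uIcc_of_le hT]
    exact ContinuousOn.clm_apply_of_opNorm_le
      (fun y => ((hScont y).mono Icc_subset_Ici_self).comp (by fun_prop) hrev)
      (fun τ hτ => hK _ (hrev hτ)) hf
  have hPx := congrArg P hx
  rw [map_add, hPS T hT, ← P.intervalIntegral_comp_comm hint] at hPx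
  calc ∫ τ in 0..T, P (f τ) = ∫ τ in 0..T, P (S (T - τ) (f τ)) := by
        refine integral_congr fun τ hτ => (hPS _ ?_ _).symm
        rw [uIcc_of_le hT] at hτ
        exact (hrev hτ).1
    _ = 0 := left_eq_add.mp hPx

end MildSolution

section Projection

variable {X : Type*} [NormedAddCommGroup X] [NormedSpace ℝ X] {N M : Submodule ℝ X}
  {P : X →L[ℝ] X}

theorem map_eq_zero_of_mem_of_isCompl (hcompl : IsCompl N M) (hPN : ∀ x, P x ∈ N)
    (hPM : ∀ x, x - P x ∈ M) {m : X} (hm : m ∈ M) : P m = 0 := by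
  have hPmM : P m ∈ M := by simpa using M.sub_mem hm (hPM m)
  exact Submodule.disjoint_def.mp hcompl.disjoint _ (hPN m) hPmM

theorem map_semigroup_apply_eq {S : ℝ → X →L[ℝ] X} (hPN : ∀ x, P x ∈ N)
    (hPM : ∀ x, x - P x ∈ M) (hPid : ∀ x ∈ N, P x = x) (hPM0 : ∀ m ∈ M, P m = 0)
    (hSN : ∀ x ∈ N, ∀ t : ℝ, 0 ≤ t → S t x = x) (hSM : ∀ x ∈ M, ∀ t : ℝ, 0 ≤ t → S t x ∈ M)
    {t : ℝ} (ht : 0 ≤ t) (x : X) : P (S t x) = P x := by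
  have hsplit : S t x = P x + S t (x - P x) := by
    rw [map_sub, hSN _ (hPN x) t ht, add_sub_cancel]
  rw [hsplit, map_add, hPM0 _ (hSM _ (hPM x) t ht), add_zero, hPid _ (hPN x)]

def homeomorphProdOfProj (hPN : ∀ x, P x ∈ N) (hPM : ∀ x, x - P x ∈ M)
    (hPid : ∀ x ∈ N, P x = x) (hPM0 : ∀ m ∈ M, P m = 0) : X ≃ₜ N × M where
  toFun x := (⟨P x, hPN x⟩, ⟨x - P x, hPM x⟩)
  invFun q := q.1 + q.2
  left_inv x := add_sub_cancel (P x) x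
  right_inv q := by
    have hP : P (q.1 + q.2) = q.1 := by rw [map_add, hPid _ q.1.2, hPM0 _ q.2.2, add_zero]
    ext <;> simp [hP]
  continuous_toFun := by fun_prop
  continuous_invFun := by fun_prop

theorem mem_frontier_of_mem_frontier_image2_add (hPN : ∀ x, P x ∈ N) (hPM : ∀ x, x - P x ∈ M)
    (hPid : ∀ x ∈ N, P x = x) (hPM0 : ∀ m ∈ M, P m = 0) {U : Set N} {V : Set M}
    (hV : IsOpen V) (hV0 : 0 ∈ V) {z : X} (hzN : z ∈ N)
    (hz : z ∈ frontier (image2 (fun (a : N) (b : M) => (a : X) + b) U V)) :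
    (⟨z, hzN⟩ : N) ∈ frontier U := by
  set e := homeomorphProdOfProj hPN hPM hPid hPM0
  have hA : image2 (fun (a : N) (b : M) => (a : X) + b) U V = e ⁻¹' (U ×ˢ V) := by
    rw [← image_uncurry_prod, ← e.image_symm]
    rfl
  have hez : e z = (⟨z, hzN⟩, 0) := by
    ext <;> simp [e, homeomorphProdOfProj, hPid z hzN]
  rw [hA, ← e.preimage_frontier, mem_preimage, hez, frontier_prod_eq] at hz
  rcases hz with ⟨-, h0⟩ | ⟨hzU, -⟩
  · exact absurd hV0 (hV.frontier_eq ▸ h0).2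
  · exact hzU

end Projection

section Limits

variable {X : Type*} [NormedAddCommGroup X]

theorem exists_fixedPoint_subseq_tendsto {f : X → X} (hf : Continuous f) {B : Set X}
    (hB : IsCompact (closure (f '' B))) {x : ℕ → X} (hx : ∀ n, x n ∈ B)
    (hfx : Tendsto (fun n => x n - f (x n)) atTop (𝓝 0)) :
    ∃ z, f z = z ∧ ∃ φ : ℕ → ℕ, StrictMono φ ∧ Tendsto (x ∘ φ) atTop (𝓝 z) := by
  obtain ⟨z, -, φ, hφ, hfxφ⟩ :=
    hB.tendsto_subseq fun n => subset_closure (mem_image_of_mem f (hx n))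
  have hxφ : Tendsto (x ∘ φ) atTop (𝓝 z) := by
    simpa [Function.comp_def] using hfxφ.add (hfx.comp hφ.tendsto_atTop)
  exact ⟨z, tendsto_nhds_unique ((hf.tendsto z).comp hxφ) hfxφ, φ, hφ, hxφ⟩

theorem norm_smul_add_one_sub_smul_le [NormedSpace ℝ X] {s : ℝ} (hs : s ∈ Icc (0 : ℝ) 1)
    (a b : X) :
    ‖s • a + (1 - s) • b‖ ≤ ‖a‖ + ‖b‖ := by
  refine (norm_add_le _ _).trans ?_
  rw [norm_smul_of_nonneg hs.1, norm_smul_of_nonneg (sub_nonneg.2 hs.2)]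
  gcongr
  · exact mul_le_of_le_one_left (norm_nonneg a) hs.2
  · exact mul_le_of_le_one_left (norm_nonneg b) (by linarith [hs.1])

theorem tendsto_smul_add_one_sub_smul [NormedSpace ℝ X] {s : ℕ → ℝ}
    (hs : ∀ n, s n ∈ Icc (0 : ℝ) 1) {a b : ℕ → X} {z : X} (ha : Tendsto a atTop (𝓝 z))
    (hb : Tendsto b atTop (𝓝 z)) :
    Tendsto (fun n => s n • a n + (1 - s n) • b n) atTop (𝓝 z) := by
  rw [tendsto_iff_norm_sub_tendsto_zero] at ha hb ⊢
  refine squeeze_zero (fun _ => norm_nonneg _) (fun n => ?_) (by simpa using ha.add hb)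
  have hsplit : s n • a n + (1 - s n) • b n - z = s n • (a n - z) + (1 - s n) • (b n - z) := by
    module
  exact hsplit ▸ norm_smul_add_one_sub_smul_le (hs n) _ _

theorem tendsto_intervalIntegral_comp {E : Type*} [NormedAddCommGroup E] [NormedSpace ℝ E]
    {G : ℝ → X → E} {T C : ℝ} (hT : 0 ≤ T)
    (hG : ContinuousOn (fun p : ℝ × X => G p.1 p.2) (Icc 0 T ×ˢ univ)) {y : ℕ → ℝ → X}
    (hy : ∀ n, ContinuousOn (y n) (Icc 0 T)) (hbound : ∀ n, ∀ τ ∈ Icc 0 T, ‖G τ (y n τ)‖ ≤ C)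
    {z : X} (hlim : ∀ τ ∈ Icc 0 T, Tendsto (fun n => y n τ) atTop (𝓝 z)) :
    Tendsto (fun n => ∫ τ in 0..T, G τ (y n τ)) atTop (𝓝 (∫ τ in 0..T, G τ z)) := by
  have hIoc : uIoc 0 T ⊆ Icc 0 T := by rw [uIoc_of_le hT]; exact Ioc_subset_Icc_self
  refine tendsto_integral_filter_of_dominated_convergence (fun _ => C)
    (Eventually.of_forall fun n => ?_) (Eventually.of_forall fun n => ?_)
    intervalIntegrable_const (ae_of_all _ fun τ hτ => ?_)
  · exact ((hG.comp (continuousOn_id.prodMk (hy n)) fun τ hτ => ⟨hτ, trivial⟩).mono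
      hIoc).aestronglyMeasurable measurableSet_uIoc
  · exact ae_of_all _ fun τ hτ => hbound n τ (hIoc hτ)
  · have hτ' := hIoc hτ
    exact ((hG (τ, z) ⟨hτ', trivial⟩).tendsto.comp
      (tendsto_nhdsWithin_iff.2 ⟨tendsto_const_nhds.prodMk_nhds (hlim τ hτ'),
        Eventually.of_forall fun _ => ⟨hτ', trivial⟩⟩))

end Limits

section Bounds

variable {X : Type*} [NormedAddCommGroup X]

theorem exists_forall_norm_le_mul_one_add {Y : Type*} [NormedAddCommGroup Y] {F : ℝ → X → Y}
    {c : ℝ → ℝ} (hc : Continuous c) (hF : ∀ t x, 0 ≤ t → ‖F t x‖ ≤ c t * (1 + ‖x‖)) (T : ℝ) :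
    ∃ c₀, 0 ≤ c₀ ∧ ∀ t ∈ Icc 0 T, ∀ x, ‖F t x‖ ≤ c₀ * (1 + ‖x‖) := by
  obtain ⟨C, hC⟩ := (isCompact_Icc (a := 0) (b := T)).exists_bound_of_continuousOn hc.continuousOn
  refine ⟨max C 0, le_max_right _ _, fun t ht x => (hF t x ht.1).trans ?_⟩
  gcongr
  exact (le_abs_self _).trans ((hC t ht).trans (le_max_left _ _))

theorem isBounded_image2_coe_add [NormedSpace ℝ X] {N M : Submodule ℝ X} {U : Set N} {V : Set M}
    (hU : IsBounded U) (hV : IsBounded V) :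
    IsBounded (image2 (fun (a : N) (b : M) => (a : X) + b) U V) := by
  have hA : image2 (fun (a : N) (b : M) => (a : X) + b) U V =
      (Subtype.val '' U : Set X) + Subtype.val '' V := by
    rw [← image2_add, image2_image_left, image2_image_right]
  rw [hA]
  exact (isBounded_induced.1 hU).add (isBounded_induced.1 hV)

end Bounds

section Solution

variable {X : Type*} [NormedAddCommGroup X] [NormedSpace ℝ X] {S : ℝ → X →L[ℝ] X}
  {P : X →L[ℝ] X} {F : ℝ → X → X} {T ε s : ℝ} {x : X} {u : ℝ → X}

theorem norm_forcing_le {G : X → X} {c₀ ε s ρ : ℝ} (hG : ∀ z, ‖G z‖ ≤ c₀ * (1 + ‖z‖))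
    (hε : 0 ≤ ε) (hs : s ∈ Icc (0 : ℝ) 1) (P : X →L[ℝ] X) {v : X} (hv : ‖v‖ ≤ ρ) (w : X) :
    ‖ε • P (G (s • w + (1 - s) • v)) + (ε * s) • (G w - P (G w))‖ ≤
      ε * (c₀ * (1 + 2 * ‖P‖ + ‖P‖ * ρ)) * (1 + ‖w‖) := by
  have hc₀ : 0 ≤ c₀ := nonneg_of_mul_nonneg_left ((norm_nonneg _).trans (hG 0)) (by simp)
  have hw := norm_nonneg w
  have hPF : ‖P (G (s • w + (1 - s) • v))‖ ≤ ‖P‖ * (c₀ * (1 + (‖w‖ + ρ))) :=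
    P.le_of_opNorm_le_of_le le_rfl ((hG _).trans (by
      gcongr; exact (norm_smul_add_one_sub_smul_le hs w v).trans (by linarith)))
  have hQF : ‖G w - P (G w)‖ ≤ (1 + ‖P‖) * (c₀ * (1 + ‖w‖)) := by
    calc ‖G w - P (G w)‖ ≤ ‖G w‖ + ‖P‖ * ‖G w‖ := norm_sub_le_of_le le_rfl (P.le_opNorm _)
      _ = (1 + ‖P‖) * ‖G w‖ := by ring
      _ ≤ _ := by gcongr; exact hG w
  calc _ ≤ ε * ‖P (G (s • w + (1 - s) • v))‖ + ε * ‖G w - P (G w)‖ := by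
        refine norm_add_le_of_le ?_ ?_
        · rw [norm_smul_of_nonneg hε]
        · rw [norm_smul_of_nonneg (mul_nonneg hε hs.1)]
          exact mul_le_mul_of_nonneg_right (mul_le_of_le_one_right hε hs.2) (norm_nonneg _)
    _ ≤ ε * (‖P‖ * (c₀ * (1 + (‖w‖ + ρ))) + (1 + ‖P‖) * (c₀ * (1 + ‖w‖))) := by
        rw [mul_add]; gcongr
    _ ≤ _ := by
        rw [mul_assoc]
        have hρ : ‖P‖ * c₀ * ρ ≤ ‖P‖ * c₀ * ρ * (1 + ‖w‖) :=
          le_mul_of_one_le_right (by positivity [(norm_nonneg v).trans hv]) (by linarith)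
        gcongr
        linarith

def IsHomotopySolution (S : ℝ → X →L[ℝ] X) (P : X →L[ℝ] X) (F : ℝ → X → X) (T ε s : ℝ) (x : X)
    (u : ℝ → X) : Prop :=
  ContinuousOn u (Icc 0 T) ∧ u T = x ∧
    ∀ t ∈ Icc 0 T, u t = S t x + ∫ τ in 0..t,
      S (t - τ) (ε • P (F τ (s • u τ + (1 - s) • P x)) + (ε * s) • (F τ (u τ) - P (F τ (u τ))))

theorem IsHomotopySolution.norm_le {K c₀ R : ℝ} (h : IsHomotopySolution S P F T ε s x u)
    (hK : ∀ r ∈ Icc 0 T, ‖S r‖ ≤ K) (hF : ∀ τ ∈ Icc 0 T, ∀ z, ‖F τ z‖ ≤ c₀ * (1 + ‖z‖))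
    (hε : 0 ≤ ε) (hs : s ∈ Icc (0 : ℝ) 1) (hx : ‖x‖ ≤ R)
    (hsmall : T * K * (ε * (c₀ * (1 + 2 * ‖P‖ + ‖P‖ * (‖P‖ * R)))) ≤ 1 / 2) :
    ∀ t ∈ Icc 0 T, ‖u t‖ ≤ 2 * K * R + 1 :=
  norm_le_of_eq_semigroup_add_integral hK h.1 h.2.2
    (fun τ hτ => norm_forcing_le (hF τ hτ) hε hs P (P.le_of_opNorm_le_of_le le_rfl hx) (u τ))
    hsmall hx

theorem IsHomotopySolution.norm_sub_le {K c₀ R : ℝ} (h : IsHomotopySolution S P F T ε s x u)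
    (hK : ∀ r ∈ Icc 0 T, ‖S r‖ ≤ K) (hF : ∀ τ ∈ Icc 0 T, ∀ z, ‖F τ z‖ ≤ c₀ * (1 + ‖z‖))
    (hε : 0 ≤ ε) (hs : s ∈ Icc (0 : ℝ) 1) (hx : ‖x‖ ≤ R)
    (hsmall : T * K * (ε * (c₀ * (1 + 2 * ‖P‖ + ‖P‖ * (‖P‖ * R)))) ≤ 1 / 2) :
    ∀ t ∈ Icc 0 T, ‖u t - S t x‖ ≤
      K * (ε * (c₀ * (1 + 2 * ‖P‖ + ‖P‖ * (‖P‖ * R))) * (2 + 2 * K * R)) * T :=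
  norm_sub_semigroup_le_of_eq_semigroup_add_integral hK h.1 h.2.2
    (fun τ hτ => norm_forcing_le (hF τ hτ) hε hs P (P.le_of_opNorm_le_of_le le_rfl hx) (u τ))
    hsmall hx

theorem IsHomotopySolution.integral_proj_eq_zero [CompleteSpace X] {K : ℝ}
    (h : IsHomotopySolution S P F T ε s x u) (hT : 0 ≤ T)
    (hScont : ∀ x : X, ContinuousOn (fun t => S t x) (Ici 0)) (hK : ∀ r ∈ Icc 0 T, ‖S r‖ ≤ K)
    (hPS : ∀ t, 0 ≤ t → ∀ x, P (S t x) = P x) (hPP : ∀ x, P (P x) = P x)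
    (hFcont : ContinuousOn (fun p : ℝ × X => F p.1 p.2) (Icc 0 T ×ˢ univ)) (hε : ε ≠ 0) :
    ∫ τ in 0..T, P (F τ (s • u τ + (1 - s) • P x)) = 0 := by
  have hFu : ∀ v : ℝ → X, ContinuousOn v (Icc 0 T) → ContinuousOn (fun τ => F τ (v τ)) (Icc 0 T) :=
    fun v hv => hFcont.comp (continuousOn_id.prodMk hv) fun τ hτ => ⟨hτ, trivial⟩
  have hx := h.2.2 T ⟨hT, le_rfl⟩
  rw [h.2.1] at hx
  have hy := hFu (fun τ => s • u τ + (1 - s) • P x) ((h.1.const_smul s).add continuousOn_const)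
  have hu := hFu u h.1
  have hPf := integral_map_eq_zero_of_eq_semigroup_add_integral hT hScont hK hPS
    (((P.continuous.comp_continuousOn hy).const_smul ε).add
      ((hu.sub (P.continuous.comp_continuousOn hu)).const_smul _)) hx
  simpa [hPP, intervalIntegral.integral_smul, hε] using hPf

theorem exists_mem_frontier_integral_eq_zero_of_isHomotopySolution [CompleteSpace X]
    {N M : Submodule ℝ X} {U : Set N} {V : Set M} {K c₀ R : ℝ} (hT : 0 < T)
    (hScont : ∀ x : X, ContinuousOn (fun t => S t x) (Ici 0))
    (hScomp :
      IsCompact (closure (S T '' frontier (image2 (fun (a : N) (b : M) => (a : X) + b) U V))))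
    (hN : ∀ x, S T x = x → x ∈ N) (hSN : ∀ x ∈ N, ∀ t : ℝ, 0 ≤ t → S t x = x)
    (hPN : ∀ x, P x ∈ N) (hPM : ∀ x, x - P x ∈ M) (hPid : ∀ x ∈ N, P x = x)
    (hPM0 : ∀ m ∈ M, P m = 0) (hPS : ∀ t, 0 ≤ t → ∀ x, P (S t x) = P x)
    (hK : ∀ r ∈ Icc 0 T, ‖S r‖ ≤ K)
    (hFcont : ContinuousOn (fun p : ℝ × X => F p.1 p.2) (Icc 0 T ×ˢ univ))
    (hF : ∀ τ ∈ Icc 0 T, ∀ z, ‖F τ z‖ ≤ c₀ * (1 + ‖z‖)) (hV : IsOpen V) (hV0 : 0 ∈ V)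
    {ε s : ℕ → ℝ} {x : ℕ → X} {u : ℕ → ℝ → X} (hε : ∀ n, 0 < ε n)
    (hε0 : Tendsto ε atTop (𝓝 0))
    (hsmall : ∀ n, T * K * (ε n * (c₀ * (1 + 2 * ‖P‖ + ‖P‖ * (‖P‖ * R)))) ≤ 1 / 2)
    (hs : ∀ n, s n ∈ Icc (0 : ℝ) 1)
    (hx : ∀ n, x n ∈ frontier (image2 (fun (a : N) (b : M) => (a : X) + b) U V))
    (hxR : ∀ n, ‖x n‖ ≤ R) (hu : ∀ n, IsHomotopySolution S P F T (ε n) (s n) (x n) (u n)) :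
    ∃ a ∈ frontier U, ∫ τ in 0..T, P (F τ a) = 0 := by
  have hTmem : T ∈ Icc 0 T := ⟨hT.le, le_rfl⟩
  have hclose n := (hu n).norm_sub_le hK hF (hε n).le (hs n) (hxR n) (hsmall n)
  have hclose0 : Tendsto (fun n => K * (ε n * (c₀ * (1 + 2 * ‖P‖ + ‖P‖ * (‖P‖ * R))) *
      (2 + 2 * K * R)) * T) atTop (𝓝 0) := by
    simpa using (((hε0.mul_const _).mul_const _).const_mul K).mul_const T
  obtain ⟨z, hzfix, φ, hφ, hxφ⟩ := exists_fixedPoint_subseq_tendsto (S T).continuous hScomp hx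
    (squeeze_zero_norm (fun n => (hu n).2.1 ▸ hclose n T hTmem) hclose0)
  have hzN := hN z hzfix
  refine ⟨⟨z, hzN⟩, mem_frontier_of_mem_frontier_image2_add hPN hPM hPid hPM0 hV hV0 hzN
    (isClosed_frontier.mem_of_tendsto hxφ (Eventually.of_forall fun n => hx _)), ?_⟩
  have hulim : ∀ τ ∈ Icc 0 T, Tendsto (fun n => u (φ n) τ) atTop (𝓝 z) := fun τ hτ =>
    (hSN z hzN τ hτ.1 ▸ ((S τ).continuous.tendsto z).comp hxφ).congr_dist <|
      squeeze_zero (fun _ => dist_nonneg)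
        (fun n => by rw [dist_comm, dist_eq_norm]; exact hclose _ τ hτ)
        (hclose0.comp hφ.tendsto_atTop)
  have hPx : Tendsto (fun n => P (x (φ n))) atTop (𝓝 z) :=
    hPid z hzN ▸ (P.continuous.tendsto z).comp hxφ
  have hub n := (hu n).norm_le hK hF (hε n).le (hs n) (hxR n) (hsmall n)
  have hbound : ∀ n, ∀ τ ∈ Icc 0 T, ‖P (F τ (s (φ n) • u (φ n) τ + (1 - s (φ n)) • P (x (φ n))))‖
      ≤ ‖P‖ * (c₀ * (1 + (2 * K * R + 1 + ‖P‖ * R))) := fun n τ hτ =>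
    P.le_of_opNorm_le_of_le le_rfl ((hF τ hτ _).trans (by
      have hc₀ : 0 ≤ c₀ := nonneg_of_mul_nonneg_left ((norm_nonneg _).trans (hF τ hτ 0)) (by simp)
      gcongr
      exact (norm_smul_add_one_sub_smul_le (hs _) _ _).trans
        (add_le_add (hub _ τ hτ) (P.le_of_opNorm_le_of_le le_rfl (hxR _)))))
  have hlim := tendsto_intervalIntegral_comp hT.le (P.continuous.comp_continuousOn hFcont)
    (G := fun τ z => P (F τ z)) (y := fun n τ => s (φ n) • u (φ n) τ + (1 - s (φ n)) • P (x (φ n)))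
    (fun n => ((hu (φ n)).1.const_smul _).add continuousOn_const) hbound
    fun τ hτ => tendsto_smul_add_one_sub_smul (fun n => hs (φ n)) (hulim τ hτ) hPx
  refine tendsto_nhds_unique hlim ?_
  simp_rw [(hu _).integral_proj_eq_zero hT.le hScont hK hPS (fun y => hPid _ (hPN y)) hFcont
    (hε _).ne']
  exact tendsto_const_nhds

end Solution

theorem statement11_general
    {X : Type*} [NormedAddCommGroup X] [NormedSpace ℝ X] [CompleteSpace X]
    (T : ℝ) (hT : 0 < T)
    (S : ℝ → X →L[ℝ] X)
    (hScont : ∀ x : X, ContinuousOn (fun t => S t x) (Set.Ici (0:ℝ)))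
    (hScomp : ∀ t : ℝ, 0 < t → ∀ B : Set X, Bornology.IsBounded B →
      IsCompact (closure (S t '' B)))
    (N M : Submodule ℝ X)
    (hN : ∀ x : X, x ∈ N ↔ S T x = x)
    (hSN : ∀ x ∈ N, ∀ t : ℝ, 0 ≤ t → S t x = x)
    (hcompl : IsCompl N M)
    (hSM : ∀ x ∈ M, ∀ t : ℝ, 0 ≤ t → S t x ∈ M)
    (P : X →L[ℝ] X)
    (hPN : ∀ x : X, P x ∈ N)
    (hPM : ∀ x : X, x - P x ∈ M)
    (hPid : ∀ x ∈ N, P x = x)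
    (F : ℝ → X → X)
    (hFcont : ContinuousOn (fun p : ℝ × X => F p.1 p.2) {p : ℝ × X | 0 ≤ p.1})
    (c : ℝ → ℝ) (hc : Continuous c)
    (hF2 : ∀ (t : ℝ) (x : X), 0 ≤ t → ‖F t x‖ ≤ c t * (1 + ‖x‖))
    (U : Set ↥N) (V : Set ↥M)
    (hUb : Bornology.IsBounded U)
    (hVo : IsOpen V) (hVb : Bornology.IsBounded V) (hV0 : (0 : ↥M) ∈ V)
    (hg : ∀ x : ↥N, x ∈ frontier U → (∫ s in (0:ℝ)..T, P (F s (x : X))) ≠ 0) :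
    ∃ ε₀ : ℝ, 0 < ε₀ ∧ ε₀ < 1 ∧
      ∀ ε : ℝ, 0 < ε → ε ≤ ε₀ →
      ∀ s ∈ Set.Icc (0:ℝ) 1,
      ∀ x ∈ frontier (Set.image2 (fun (a : ↥N) (b : ↥M) => (a : X) + (b : X)) U V),
      ¬ ∃ u : ℝ → X, ContinuousOn u (Set.Icc (0:ℝ) T) ∧ u T = x ∧
        ∀ t ∈ Set.Icc (0:ℝ) T,
          u t = S t x + ∫ τ in (0:ℝ)..t,
            S (t - τ) (ε • P (F τ (s • u τ + (1 - s) • P x)) +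
              (ε * s) • (F τ (u τ) - P (F τ (u τ)))) := by
  have hPM0 : ∀ m ∈ M, P m = 0 := fun m => map_eq_zero_of_mem_of_isCompl hcompl hPN hPM
  have hPS : ∀ t, 0 ≤ t → ∀ x, P (S t x) = P x := fun t ht =>
    map_semigroup_apply_eq hPN hPM hPid hPM0 hSN hSM ht
  obtain ⟨K, hK0, hK⟩ := isCompact_Icc.exists_opNorm_le fun x =>
    (hScont x).mono (Icc_subset_Ici_self : Icc 0 T ⊆ _)
  obtain ⟨c₀, hc₀, hF⟩ := exists_forall_norm_le_mul_one_add hc hF2 T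
  have hA := (isBounded_image2_coe_add hUb hVb).closure.subset frontier_subset_closure
  obtain ⟨R, hR, hxR⟩ := hA.exists_pos_norm_le
  set B := c₀ * (1 + 2 * ‖P‖ + ‖P‖ * (‖P‖ * R))
  set ε₀ := 1 / (2 * (T * K * B + 1))
  have hTKB : 0 ≤ T * K * B := by positivity
  have hε₀ : 0 < ε₀ := by positivity
  have hε₀1 : ε₀ < 1 := by rw [div_lt_one (by positivity)]; linarith
  have hε₀n : ∀ n : ℕ, ε₀ / (n + 1) ≤ ε₀ := fun n => div_le_self hε₀.le (by simp)
  by_contra! hbad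
  choose ε hε hεn s hs x hx u hu using fun n : ℕ =>
    hbad (ε₀ / (n + 1)) (by positivity) ((hε₀n n).trans_lt hε₀1)
  have hsmall n : T * K * (ε n * B) ≤ 1 / 2 :=
    calc T * K * (ε n * B) = ε n * (T * K * B) := by ring
      _ ≤ ε₀ * (T * K * B) := by gcongr; exact (hεn n).trans (hε₀n n)
      _ ≤ 1 / 2 := by
        rw [div_mul_eq_mul_div, one_mul, div_le_iff₀ (by positivity)]
        linarith
  have hε0 : Tendsto ε atTop (𝓝 0) :=
    squeeze_zero (fun n => (hε n).le) hεn (by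
      simpa [div_eq_mul_inv] using tendsto_one_div_add_atTop_nhds_zero_nat.const_mul ε₀)
  obtain ⟨a, ha, hga⟩ := exists_mem_frontier_integral_eq_zero_of_isHomotopySolution hT hScont
    (hScomp T hT _ hA) (fun x => (hN x).2) hSN hPN hPM hPid hPM0 hPS hK
    (hFcont.mono fun p hp => hp.1.1) hF hVo hV0 hε hε0 hsmall hs hx (fun n => hxR _ (hx n)) hu
  exact hg a ha hga

/-- averaging principle at resonance. Under the stated hypotheses
(compact `C₀` semigroup, `N = Ker(I - S(T))` with `S(t) ≡ I` on `N`,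
a topological complement `M` invariant under the semigroup, projections `P` onto
`N` and `Q = I − P` onto `M`, a nonlinearity `F` satisfying (F1), (F2), and the
averaged map `g(x) = ∫₀ᵀ P F(s,x) ds` nonvanishing on `∂_N U`), there is
`ε₀ ∈ (0,1)` such that for `ε ∈ (0,ε₀]`, `s ∈ [0,1]` and `x ∈ ∂(U ⊕ V)` the
homotopy fixed point equation has no solution with `u(T) = x`. -/
theorem statement11
    {X : Type*} [NormedAddCommGroup X] [NormedSpace ℝ X] [CompleteSpace X]
    (T : ℝ) (hT : 0 < T)
    (S : ℝ → X →L[ℝ] X)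
    (hS0 : S 0 = 1)
    (hSadd : ∀ t s : ℝ, 0 ≤ t → 0 ≤ s → S (t + s) = (S t).comp (S s))
    (hScont : ∀ x : X, ContinuousOn (fun t => S t x) (Set.Ici (0:ℝ)))
    (hScomp : ∀ t : ℝ, 0 < t → ∀ B : Set X, Bornology.IsBounded B →
      IsCompact (closure (S t '' B)))
    (N M : Submodule ℝ X)
    (hNc : IsClosed (N : Set X)) (hMc : IsClosed (M : Set X))
    (hN : ∀ x : X, x ∈ N ↔ S T x = x)
    (hNne : N ≠ ⊥)
    (hSN : ∀ x ∈ N, ∀ t : ℝ, 0 ≤ t → S t x = x)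
    (hcompl : IsCompl N M)
    (hSM : ∀ x ∈ M, ∀ t : ℝ, 0 ≤ t → S t x ∈ M)
    (P : X →L[ℝ] X)
    (hPN : ∀ x : X, P x ∈ N)
    (hPM : ∀ x : X, x - P x ∈ M)
    (hPid : ∀ x ∈ N, P x = x)
    (F : ℝ → X → X)
    (hFcont : ContinuousOn (fun p : ℝ × X => F p.1 p.2) {p : ℝ × X | 0 ≤ p.1})
    (hF1 : ∀ x₀ : X, ∃ W ∈ nhds x₀, ∃ L : ℝ, 0 < L ∧
      ∀ x ∈ W, ∀ y ∈ W, ∀ t : ℝ, 0 ≤ t → ‖F t x - F t y‖ ≤ L * ‖x - y‖)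
    (c : ℝ → ℝ) (hc : Continuous c) (hc0 : ∀ t : ℝ, 0 ≤ t → 0 ≤ c t)
    (hF2 : ∀ (t : ℝ) (x : X), 0 ≤ t → ‖F t x‖ ≤ c t * (1 + ‖x‖))
    (U : Set ↥N) (V : Set ↥M)
    (hUo : IsOpen U) (hUb : Bornology.IsBounded U)
    (hVo : IsOpen V) (hVb : Bornology.IsBounded V) (hV0 : (0 : ↥M) ∈ V)
    (hg : ∀ x : ↥N, x ∈ frontier U → (∫ s in (0:ℝ)..T, P (F s (x : X))) ≠ 0) :
    ∃ ε₀ : ℝ, 0 < ε₀ ∧ ε₀ < 1 ∧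
      ∀ ε : ℝ, 0 < ε → ε ≤ ε₀ →
      ∀ s ∈ Set.Icc (0:ℝ) 1,
      ∀ x ∈ frontier (Set.image2 (fun (a : ↥N) (b : ↥M) => (a : X) + (b : X)) U V),
      ¬ ∃ u : ℝ → X, ContinuousOn u (Set.Icc (0:ℝ) T) ∧ u T = x ∧
        ∀ t ∈ Set.Icc (0:ℝ) T,
          u t = S t x + ∫ τ in (0:ℝ)..t,
            S (t - τ) (ε • P (F τ (s • u τ + (1 - s) • P x)) +
              (ε * s) • (F τ (u τ) - P (F τ (u τ)))) :=
  statement11_general T hT S hScont hScomp N M hN hSN hcompl hSM P hPN hPM hPid F hFcont c hc hF2 U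
    V hUb hVo hVb hV0 hg
end

section
/- Let Ω⊆ℝⁿ be an open bounded set, X = L²(Ω) (real), T>0, N a finite-dimensional subspace of X, and P:X→X the orthogonal projection onto N. Let f:[0,∞)×Ω×ℝ→ℝ be continuous satisfying conditions (a) and (d), let F be the associated Nemytskii operator, and define g:N→N by g(u) := ∫₀ᵀ P F(t,u) dt. If for every u∈N with ‖u‖=1 one has ∫₀ᵀ∫_{{u>0}} f₊(t,x)u(x) dx dt + ∫₀ᵀ∫_{{u<0}} f₋(t,x)u(x) dx dt ≠ 0, then there exists R₀>0 such that g(u)≠0 for every u∈N with ‖u‖≥R₀. -/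
open MeasureTheory Set Filter Topology Bornology intervalIntegral
open scoped RealInnerProductSpace

/-!
Argue by contradiction along a sequence `uₖ ∈ N` with `‖uₖ‖ → ∞` and `g(uₖ) = 0`. Since `N` is
finite-dimensional, a subsequence of `uₖ / ‖uₖ‖` converges in `L²`, and then a.e., to some
`v ∈ N` with `‖v‖ = 1`; hence `uₖ(x) → +∞` where `v > 0` and `uₖ(x) → -∞` where `v < 0`.
Since `x - P x ⟂ N`, `0 = ⟪v, g(uₖ)⟫ = ∫₀ᵀ ∫_Ω f(t, x, uₖ(x)) v(x) dx dt`, and by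
dominated convergence (twice, using `|f| ≤ m`) the right side tends to the Landesman–Lazer
expression of `v`, which is nonzero.
-/

section Limits

variable {α : Type*} [MeasurableSpace α] {μ : Measure α}

theorem norm_mul_le_mul_abs {a b m : ℝ} (h : |a| ≤ m) : ‖a * b‖ ≤ m * |b| := by
  rw [Real.norm_eq_abs, abs_mul]
  exact mul_le_mul_of_nonneg_right h (abs_nonneg b)

theorem ae_abs_le_of_tendsto {f : α → ℝ → ℝ} {g : α → ℝ} {l : Filter ℝ} [l.NeBot] {m : ℝ}
    (hbound : ∀ᵐ x ∂μ, ∀ y, |f x y| ≤ m) (hg : ∀ᵐ x ∂μ, Tendsto (f x) l (𝓝 (g x))) :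
    ∀ᵐ x ∂μ, |g x| ≤ m := by
  filter_upwards [hbound, hg] with x hb hx
  exact le_of_tendsto hx.abs (Eventually.of_forall hb)

theorem integrable_mul_of_abs_le {g v : α → ℝ} {m : ℝ} (hg : AEStronglyMeasurable g μ)
    (hgm : ∀ᵐ x ∂μ, |g x| ≤ m) (hv : Integrable v μ) :
    Integrable (fun x => g x * v x) μ :=
  (hv.abs.const_mul m).mono' (hg.mul hv.1) (hgm.mono fun _ hx => norm_mul_le_mul_abs hx)

theorem continuousOn_integral_mul {X : Type*} [TopologicalSpace X] [FirstCountableTopology X]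
    {φ : X → α → ℝ} {v : α → ℝ} {s : Set X} {m : ℝ}
    (hmeas : ∀ t ∈ s, AEStronglyMeasurable (φ t) μ) (hbound : ∀ t ∈ s, ∀ᵐ x ∂μ, |φ t x| ≤ m)
    (hv : Integrable v μ) (hcont : ∀ᵐ x ∂μ, ContinuousOn (fun t => φ t x) s) :
    ContinuousOn (fun t => ∫ x, φ t x * v x ∂μ) s :=
  continuousOn_of_dominated (fun t ht => (hmeas t ht).mul hv.1)
    (fun t ht => (hbound t ht).mono fun _ hx => norm_mul_le_mul_abs hx) (hv.abs.const_mul m)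
    (hcont.mono fun _ hx => hx.mul continuousOn_const)

theorem tendsto_integral_mul_of_tendsto_atTop_atBot {ι : Type*} {l : Filter ι}
    [l.IsCountablyGenerated] {f : α → ℝ → ℝ} {fp fm v : α → ℝ} {w : ι → α → ℝ} {m : ℝ}
    (hmeas : ∀ i, AEStronglyMeasurable (fun x => f x (w i x)) μ)
    (hbound : ∀ᵐ x ∂μ, ∀ y, |f x y| ≤ m)
    (hfp : ∀ᵐ x ∂μ, Tendsto (f x) atTop (𝓝 (fp x)))
    (hfm : ∀ᵐ x ∂μ, Tendsto (f x) atBot (𝓝 (fm x)))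
    (hfp_meas : AEStronglyMeasurable fp μ) (hfm_meas : AEStronglyMeasurable fm μ)
    (hv : Integrable v μ)
    (hwp : ∀ᵐ x ∂μ, 0 < v x → Tendsto (fun i => w i x) l atTop)
    (hwm : ∀ᵐ x ∂μ, v x < 0 → Tendsto (fun i => w i x) l atBot) :
    Tendsto (fun i => ∫ x, f x (w i x) * v x ∂μ) l
      (𝓝 ((∫ x in {x | 0 < v x}, fp x * v x ∂μ) + ∫ x in {x | v x < 0}, fm x * v x ∂μ)) := by
  have hpos : NullMeasurableSet {x | 0 < v x} μ :=
    nullMeasurableSet_lt aemeasurable_const hv.aemeasurable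
  have hneg : NullMeasurableSet {x | v x < 0} μ :=
    nullMeasurableSet_lt hv.aemeasurable aemeasurable_const
  rw [← integral_indicator₀ hpos, ← integral_indicator₀ hneg, ← integral_add
    ((integrable_mul_of_abs_le hfp_meas (ae_abs_le_of_tendsto hbound hfp) hv).indicator₀ hpos)
    ((integrable_mul_of_abs_le hfm_meas (ae_abs_le_of_tendsto hbound hfm) hv).indicator₀ hneg)]
  refine tendsto_integral_filter_of_dominated_convergence (fun x => m * |v x|)
    (.of_forall fun i => (hmeas i).mul hv.1)
    (.of_forall fun i => hbound.mono fun _ hx => norm_mul_le_mul_abs (hx _))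
    (hv.abs.const_mul m) ?_
  filter_upwards [hfp, hfm, hwp, hwm] with x hxp hxm hwxp hwxm
  rcases lt_trichotomy (v x) 0 with h | h | h
  · simpa [indicator, h, h.not_gt] using (hxm.comp (hwxm h)).mul_const (v x)
  · simpa [indicator, h] using tendsto_const_nhds
  · simpa [indicator, h, h.not_gt] using (hxp.comp (hwxp h)).mul_const (v x)

end Limits

section Lp

variable {α : Type*} [MeasurableSpace α] {μ : Measure α}

open scoped ENNReal in
theorem exists_subseq_tendsto_atTop_atBot_of_tendsto_norm {p : ℝ≥0∞} [Fact (1 ≤ p)]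
    {N : Submodule ℝ (Lp ℝ p μ)} [FiniteDimensional ℝ N] {u : ℕ → Lp ℝ p μ}
    (hu : ∀ k, u k ∈ N) (hnorm : Tendsto (fun k => ‖u k‖) atTop atTop) :
    ∃ v ∈ N, ‖v‖ = 1 ∧ ∃ σ : ℕ → ℕ,
      (∀ᵐ x ∂μ, 0 < v x → Tendsto (fun k => u (σ k) x) atTop atTop) ∧
      (∀ᵐ x ∂μ, v x < 0 → Tendsto (fun k => u (σ k) x) atTop atBot) := by
  set e : ℕ → N := fun k => ⟨‖u k‖⁻¹ • u k, N.smul_mem _ (hu k)⟩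
  have he_norm : ∀ᶠ k in atTop, ‖e k‖ = 1 := by
    filter_upwards [hnorm.eventually_gt_atTop 0] with k hk
    simp [e, norm_smul, hk.ne']
  obtain ⟨v, -, φ, hφ, hφv⟩ := (isCompact_closedBall (0 : N) 1).tendsto_subseq
    (x := e) fun k => by simp [e, norm_smul, inv_mul_le_one]
  have hv_norm : ‖v‖ = 1 :=
    tendsto_nhds_unique ((continuous_norm.tendsto v).comp hφv)
      (tendsto_const_nhds.congr' ((hφ.tendsto_atTop.eventually he_norm).mono fun _ hk => hk.symm))
  obtain ⟨ψ, hψ, hψv⟩ := (tendstoInMeasure_of_tendsto_Lp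
    ((continuous_subtype_val.tendsto v).comp hφv)).exists_seq_tendsto_ae
  set σ := φ ∘ ψ
  have hσ : Tendsto (fun k => ‖u (σ k)‖) atTop atTop := hnorm.comp (hφ.comp hψ).tendsto_atTop
  have hu_eq : ∀ᵐ x ∂μ,
      (fun k => ‖u (σ k)‖ * (e (σ k) : Lp ℝ p μ) x) =ᶠ[atTop] fun k => u (σ k) x := by
    filter_upwards [ae_all_iff.mpr fun k => Lp.coeFn_smul ‖u k‖⁻¹ (u k)] with x hx
    filter_upwards [hσ.eventually_gt_atTop 0] with k hk
    rw [hx, Pi.smul_apply, smul_eq_mul, mul_inv_cancel_left₀ hk.ne']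
  refine ⟨v, v.2, hv_norm, σ, ?_, ?_⟩
  · filter_upwards [hψv, hu_eq] with x hx hxu hpos
    exact (hσ.atTop_mul_pos hpos hx).congr' hxu
  · filter_upwards [hψv, hu_eq] with x hx hxu hneg
    exact (hσ.atTop_mul_neg hneg hx).congr' hxu

theorem continuousOn_Lp_two_of_dominated [IsFiniteMeasure μ] {X : Type*} [TopologicalSpace X]
    [FirstCountableTopology X] {G : X → Lp ℝ 2 μ} {g : X → α → ℝ} {s : Set X} {m : ℝ}
    (hG : ∀ t ∈ s, G t =ᵐ[μ] g t) (hbound : ∀ t ∈ s, ∀ᵐ x ∂μ, |g t x| ≤ m)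
    (hcont : ∀ᵐ x ∂μ, ContinuousOn (fun t => g t x) s) : ContinuousOn G s := by
  intro t₀ ht₀
  have hnorm : ∀ t ∈ s, ‖G t - G t₀‖ = √(∫ x, (g t x - g t₀ x) ^ 2 ∂μ) := by
    intro t ht
    rw [← Real.sqrt_sq (norm_nonneg _), ← real_inner_self_eq_norm_sq, L2.inner_def]
    congr 1
    refine integral_congr_ae ?_
    filter_upwards [Lp.coeFn_sub (G t) (G t₀), hG t ht, hG t₀ ht₀] with x h h₁ h₂
    rw [h]
    simp [h₁, h₂, sq]
  have hcont_sq : ContinuousOn (fun t => ∫ x, (g t x - g t₀ x) ^ 2 ∂μ) s := by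
    refine continuousOn_of_dominated (bound := fun _ => (2 * m) ^ 2) (fun t ht => ?_)
      (fun t ht => ?_) (integrable_const _) ?_
    · exact (((Lp.aestronglyMeasurable _).congr (hG t ht)).sub
        ((Lp.aestronglyMeasurable _).congr (hG t₀ ht₀))).pow 2
    · filter_upwards [hbound t ht, hbound t₀ ht₀] with x h₁ h₂
      rw [Real.norm_eq_abs, abs_of_nonneg (sq_nonneg _)]
      obtain ⟨h₁l, h₁r⟩ := abs_le.mp h₁
      obtain ⟨h₂l, h₂r⟩ := abs_le.mp h₂
      exact sq_le_sq' (by linarith) (by linarith)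
    · filter_upwards [hcont] with x hx
      exact (hx.sub continuousOn_const).pow 2
  have hlim : Tendsto (fun t => √(∫ x, (g t x - g t₀ x) ^ 2 ∂μ)) (𝓝[s] t₀) (𝓝 0) := by
    simpa using (hcont_sq t₀ ht₀).sqrt.tendsto
  exact tendsto_iff_norm_sub_tendsto_zero.2
    (hlim.congr' (eventually_nhdsWithin_of_forall fun t ht => (hnorm t ht).symm))

end Lp

section Nemytskii

variable {α : Type*} [MeasurableSpace α] {μ : Measure α}
  {f : ℝ → α → ℝ → ℝ} {m : ℝ} {F : ℝ → Lp ℝ 2 μ → Lp ℝ 2 μ}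

theorem continuousOn_nemytskii [IsFiniteMeasure μ]
    (hF : ∀ t, 0 ≤ t → ∀ u : Lp ℝ 2 μ, ∀ᵐ x ∂μ, F t u x = f t x (u x))
    (hf_bound : ∀ t, 0 ≤ t → ∀ᵐ x ∂μ, ∀ y, |f t x y| ≤ m)
    (hf_cont : ∀ᵐ x ∂μ, ∀ y, ContinuousOn (fun t => f t x y) (Ici 0)) (u : Lp ℝ 2 μ) :
    ContinuousOn (fun t => F t u) (Ici 0) :=
  continuousOn_Lp_two_of_dominated (fun t ht => hF t ht u)
    (fun t ht => (hf_bound t ht).mono fun _ hx => hx _) (hf_cont.mono fun _ hx => hx _)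

theorem inner_intervalIntegral_proj_nemytskii [IsFiniteMeasure μ] {N : Submodule ℝ (Lp ℝ 2 μ)}
    {P : Lp ℝ 2 μ →L[ℝ] Lp ℝ 2 μ} (hP : ∀ w, ∀ v ∈ N, ⟪w - P w, v⟫ = 0)
    (hF : ∀ t, 0 ≤ t → ∀ u : Lp ℝ 2 μ, ∀ᵐ x ∂μ, F t u x = f t x (u x))
    (hf_bound : ∀ t, 0 ≤ t → ∀ᵐ x ∂μ, ∀ y, |f t x y| ≤ m)
    (hf_cont : ∀ᵐ x ∂μ, ∀ y, ContinuousOn (fun t => f t x y) (Ici 0))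
    {T : ℝ} (hT : 0 ≤ T) {v : Lp ℝ 2 μ} (hv : v ∈ N) (u : Lp ℝ 2 μ) :
    ⟪v, ∫ t in (0:ℝ)..T, P (F t u)⟫ = ∫ t in (0:ℝ)..T, ∫ x, f t x (u x) * v x ∂μ := by
  have hint : IntervalIntegrable (fun t => F t u) volume 0 T :=
    ((continuousOn_nemytskii hF hf_bound hf_cont u).mono
      (uIcc_of_le hT ▸ Icc_subset_Ici_self)).intervalIntegrable
  have hPv : ∀ w, ⟪v, P w⟫ = ⟪v, w⟫ := fun w => by
    have := hP w v hv
    rw [inner_sub_left, sub_eq_zero] at this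
    rw [real_inner_comm, ← this, real_inner_comm]
  rw [P.intervalIntegral_comp_comm hint, hPv]
  change innerSL ℝ v _ = _
  rw [← (innerSL ℝ v).intervalIntegral_comp_comm hint]
  refine integral_congr fun t ht => ?_
  rw [uIcc_of_le hT] at ht
  simp only [innerSL_apply_apply, L2.inner_def]
  refine integral_congr_ae ?_
  filter_upwards [hF t ht.1 u] with x hx
  simp [hx, mul_comm]

theorem tendsto_intervalIntegral_integral_nemytskii {ι : Type*} {l : Filter ι}
    [l.IsCountablyGenerated] {fp fm : ℝ → α → ℝ}
    (hF : ∀ t, 0 ≤ t → ∀ u : Lp ℝ 2 μ, ∀ᵐ x ∂μ, F t u x = f t x (u x))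
    (hf_bound : ∀ t, 0 ≤ t → ∀ᵐ x ∂μ, ∀ y, |f t x y| ≤ m)
    (hf_cont : ∀ᵐ x ∂μ, ∀ y, ContinuousOn (fun t => f t x y) (Ici 0))
    (hfp : ∀ t, 0 ≤ t → ∀ᵐ x ∂μ, Tendsto (f t x) atTop (𝓝 (fp t x)))
    (hfm : ∀ t, 0 ≤ t → ∀ᵐ x ∂μ, Tendsto (f t x) atBot (𝓝 (fm t x)))
    (hfp_meas : ∀ t, 0 ≤ t → AEStronglyMeasurable (fp t) μ)
    (hfm_meas : ∀ t, 0 ≤ t → AEStronglyMeasurable (fm t) μ)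
    (hfp_cont : ∀ᵐ x ∂μ, ContinuousOn (fun t => fp t x) (Ici 0))
    (hfm_cont : ∀ᵐ x ∂μ, ContinuousOn (fun t => fm t x) (Ici 0))
    {v : α → ℝ} (hv : Integrable v μ) {w : ι → Lp ℝ 2 μ}
    (hwp : ∀ᵐ x ∂μ, 0 < v x → Tendsto (fun i => w i x) l atTop)
    (hwm : ∀ᵐ x ∂μ, v x < 0 → Tendsto (fun i => w i x) l atBot) {T : ℝ} (hT : 0 ≤ T) :
    Tendsto (fun i => ∫ t in (0:ℝ)..T, ∫ x, f t x (w i x) * v x ∂μ) l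
      (𝓝 ((∫ t in (0:ℝ)..T, ∫ x in {x | 0 < v x}, fp t x * v x ∂μ) +
        ∫ t in (0:ℝ)..T, ∫ x in {x | v x < 0}, fm t x * v x ∂μ)) := by
  have hIcc : uIcc 0 T ⊆ Ici 0 := uIcc_of_le hT ▸ Icc_subset_Ici_self
  have hIoc : uIoc 0 T ⊆ Ici 0 := uIoc_subset_uIcc.trans hIcc
  have hnonneg : ∀ {t}, t ∈ uIoc 0 T → 0 ≤ t := fun ht => hIoc ht
  have hmeas : ∀ u : Lp ℝ 2 μ, ∀ t, 0 ≤ t → AEStronglyMeasurable (fun x => f t x (u x)) μ :=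
    fun u t ht => (Lp.aestronglyMeasurable (F t u)).congr (hF t ht u)
  have hint : ∀ {g : ℝ → α → ℝ} (S : Set α), (∀ t, 0 ≤ t → AEStronglyMeasurable (g t) μ) →
      (∀ t, 0 ≤ t → ∀ᵐ x ∂μ, |g t x| ≤ m) → (∀ᵐ x ∂μ, ContinuousOn (fun t => g t x) (Ici 0)) →
      IntervalIntegrable (fun t => ∫ x in S, g t x * v x ∂μ) volume 0 T :=
    fun S hg hgb hgc => ((continuousOn_integral_mul (fun t ht => (hg t ht).restrict)
      (fun t ht => ae_restrict_of_ae (hgb t ht)) hv.restrict (ae_restrict_of_ae hgc)).mono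
      hIcc).intervalIntegrable
  rw [← intervalIntegral.integral_add
    (hint _ hfp_meas (fun t ht => ae_abs_le_of_tendsto (hf_bound t ht) (hfp t ht)) hfp_cont)
    (hint _ hfm_meas (fun t ht => ae_abs_le_of_tendsto (hf_bound t ht) (hfm t ht)) hfm_cont)]
  refine intervalIntegral.tendsto_integral_filter_of_dominated_convergence
    (fun _ => m * ∫ x, |v x| ∂μ) (.of_forall fun i => ?_)
    (.of_forall fun i => .of_forall fun t ht => ?_) intervalIntegrable_const
    (.of_forall fun t ht => tendsto_integral_mul_of_tendsto_atTop_atBot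
      (fun i => hmeas (w i) t (hnonneg ht)) (hf_bound t (hnonneg ht)) (hfp t (hnonneg ht))
      (hfm t (hnonneg ht)) (hfp_meas t (hnonneg ht)) (hfm_meas t (hnonneg ht)) hv hwp hwm)
  · exact ((continuousOn_integral_mul (hmeas (w i)) (fun t ht => (hf_bound t ht).mono
      fun _ hx => hx _) hv (hf_cont.mono fun _ hx => hx _)).mono hIoc).aestronglyMeasurable
      measurableSet_uIoc
  · rw [← MeasureTheory.integral_const_mul]
    exact norm_integral_le_of_norm_le (hv.abs.const_mul m)
      ((hf_bound t (hnonneg ht)).mono fun _ hx => norm_mul_le_mul_abs (hx _))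

end Nemytskii

theorem statement13_general
    (n : ℕ) (Ω : Set (EuclideanSpace ℝ (Fin n)))
    (hΩo : IsOpen Ω) (hΩb : Bornology.IsBounded Ω)
    (T : ℝ) (hT : 0 < T)
    (N : Submodule ℝ (Lp ℝ 2 (volume.restrict Ω)))
    (hNfin : FiniteDimensional ℝ ↥N)
    -- `P` is the orthogonal projection onto `N`
    (P : Lp ℝ 2 (volume.restrict Ω) →L[ℝ] Lp ℝ 2 (volume.restrict Ω))
    (hPorth : ∀ x : Lp ℝ 2 (volume.restrict Ω), ∀ y ∈ N, ⟪x - P x, y⟫ = (0:ℝ))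
    (f : ℝ → EuclideanSpace ℝ (Fin n) → ℝ → ℝ)
    (hfc : ContinuousOn (fun p : ℝ × EuclideanSpace ℝ (Fin n) × ℝ =>
      f p.1 p.2.1 p.2.2) (Set.Ici (0:ℝ) ×ˢ Ω ×ˢ Set.univ))
    -- condition (a): boundedness
    (m : ℝ)
    (hfa : ∀ t : ℝ, 0 ≤ t → ∀ x ∈ Ω, ∀ y : ℝ, |f t x y| ≤ m)
    -- condition (d): limits at ±∞
    (fp fm : ℝ → EuclideanSpace ℝ (Fin n) → ℝ)
    (hfpc : ContinuousOn (fun p : ℝ × EuclideanSpace ℝ (Fin n) => fp p.1 p.2)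
      (Set.Ici (0:ℝ) ×ˢ Ω))
    (hfmc : ContinuousOn (fun p : ℝ × EuclideanSpace ℝ (Fin n) => fm p.1 p.2)
      (Set.Ici (0:ℝ) ×ˢ Ω))
    (hfp : ∀ t : ℝ, 0 ≤ t → ∀ x ∈ Ω,
      Filter.Tendsto (fun y => f t x y) Filter.atTop (nhds (fp t x)))
    (hfm : ∀ t : ℝ, 0 ≤ t → ∀ x ∈ Ω,
      Filter.Tendsto (fun y => f t x y) Filter.atBot (nhds (fm t x)))
    -- `F` is the Nemytskii operator associated with `f`
    (F : ℝ → Lp ℝ 2 (volume.restrict Ω) → Lp ℝ 2 (volume.restrict Ω))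
    (hF : ∀ t : ℝ, 0 ≤ t → ∀ u : Lp ℝ 2 (volume.restrict Ω),
      ∀ᵐ x ∂(volume.restrict Ω), F t u x = f t x (u x))
    -- Landesman–Lazer type condition (LL≠)
    (hLL : ∀ u : Lp ℝ 2 (volume.restrict Ω), u ∈ N → ‖u‖ = 1 →
      (∫ t in (0:ℝ)..T, ∫ x in {x | 0 < u x}, fp t x * u x ∂(volume.restrict Ω)) +
      (∫ t in (0:ℝ)..T, ∫ x in {x | u x < 0}, fm t x * u x ∂(volume.restrict Ω))
        ≠ 0) :
    ∃ R₀ : ℝ, 0 < R₀ ∧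
      ∀ u : Lp ℝ 2 (volume.restrict Ω), u ∈ N → R₀ ≤ ‖u‖ →
        (∫ t in (0:ℝ)..T, P (F t u)) ≠ 0 := by
  have : IsFiniteMeasure (volume.restrict Ω) := isFiniteMeasure_restrict.2 hΩb.measure_lt_top.ne
  have hΩm := hΩo.measurableSet
  have hΩ : ∀ᵐ x ∂(volume.restrict Ω), x ∈ Ω := ae_restrict_mem hΩm
  have hf_bound (t : ℝ) (ht : 0 ≤ t) : ∀ᵐ x ∂(volume.restrict Ω), ∀ y, |f t x y| ≤ m :=
    hΩ.mono (hfa t ht)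
  have hf_cont : ∀ᵐ x ∂(volume.restrict Ω), ∀ y, ContinuousOn (fun t => f t x y) (Ici 0) :=
    hΩ.mono fun x hx y =>
      hfc.uncurry_right (f := fun t (p : _ × ℝ) => f t p.1 p.2) (x, y) (mk_mem_prod hx (mem_univ y))
  by_contra! hcon
  choose u huN hu_norm hg using fun k : ℕ => hcon (k + 1) (by positivity)
  obtain ⟨v, hvN, hv_norm, σ, hpos, hneg⟩ := exists_subseq_tendsto_atTop_atBot_of_tendsto_norm huN
    (tendsto_atTop_mono hu_norm (tendsto_atTop_add_const_right _ 1 tendsto_natCast_atTop_atTop))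
  have hlim := tendsto_intervalIntegral_integral_nemytskii hF hf_bound hf_cont
    (fun t ht => hΩ.mono (hfp t ht)) (fun t ht => hΩ.mono (hfm t ht))
    (fun t ht => (hfpc.uncurry_left t ht).aestronglyMeasurable hΩm)
    (fun t ht => (hfmc.uncurry_left t ht).aestronglyMeasurable hΩm)
    (hΩ.mono fun x hx => hfpc.uncurry_right x hx) (hΩ.mono fun x hx => hfmc.uncurry_right x hx)
    ((Lp.memLp v).integrable one_le_two) hpos hneg hT.le
  have hzero (k : ℕ) : ∫ t in (0:ℝ)..T, ∫ x, f t x (u (σ k) x) * v x ∂(volume.restrict Ω) = 0 := by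
    rw [← inner_intervalIntegral_proj_nemytskii hPorth hF hf_bound hf_cont hT.le hvN, hg,
      inner_zero_right]
  simp_rw [hzero] at hlim
  exact hLL v hvN hv_norm (tendsto_nhds_unique hlim tendsto_const_nhds)

/-- under the Landesman–Lazer type condition (LL≠), the averaged
map `g(u) = ∫₀ᵀ P F(t,u) dt` has no zeros on `N` outside a large ball. -/
theorem statement13
    (n : ℕ) (Ω : Set (EuclideanSpace ℝ (Fin n)))
    (hΩo : IsOpen Ω) (hΩb : Bornology.IsBounded Ω)
    (T : ℝ) (hT : 0 < T)
    (N : Submodule ℝ (Lp ℝ 2 (volume.restrict Ω)))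
    (hNfin : FiniteDimensional ℝ ↥N)
    -- `P` is the orthogonal projection onto `N`
    (P : Lp ℝ 2 (volume.restrict Ω) →L[ℝ] Lp ℝ 2 (volume.restrict Ω))
    (hPmem : ∀ x : Lp ℝ 2 (volume.restrict Ω), P x ∈ N)
    (hPorth : ∀ x : Lp ℝ 2 (volume.restrict Ω), ∀ y ∈ N, ⟪x - P x, y⟫ = (0:ℝ))
    (f : ℝ → EuclideanSpace ℝ (Fin n) → ℝ → ℝ)
    (hfc : ContinuousOn (fun p : ℝ × EuclideanSpace ℝ (Fin n) × ℝ =>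
      f p.1 p.2.1 p.2.2) (Set.Ici (0:ℝ) ×ˢ Ω ×ˢ Set.univ))
    -- condition (a): boundedness
    (m : ℝ) (hm : 0 < m)
    (hfa : ∀ t : ℝ, 0 ≤ t → ∀ x ∈ Ω, ∀ y : ℝ, |f t x y| ≤ m)
    -- condition (d): limits at ±∞
    (fp fm : ℝ → EuclideanSpace ℝ (Fin n) → ℝ)
    (hfpc : ContinuousOn (fun p : ℝ × EuclideanSpace ℝ (Fin n) => fp p.1 p.2)
      (Set.Ici (0:ℝ) ×ˢ Ω))
    (hfmc : ContinuousOn (fun p : ℝ × EuclideanSpace ℝ (Fin n) => fm p.1 p.2)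
      (Set.Ici (0:ℝ) ×ˢ Ω))
    (hfp : ∀ t : ℝ, 0 ≤ t → ∀ x ∈ Ω,
      Filter.Tendsto (fun y => f t x y) Filter.atTop (nhds (fp t x)))
    (hfm : ∀ t : ℝ, 0 ≤ t → ∀ x ∈ Ω,
      Filter.Tendsto (fun y => f t x y) Filter.atBot (nhds (fm t x)))
    -- `F` is the Nemytskii operator associated with `f`
    (F : ℝ → Lp ℝ 2 (volume.restrict Ω) → Lp ℝ 2 (volume.restrict Ω))
    (hF : ∀ t : ℝ, 0 ≤ t → ∀ u : Lp ℝ 2 (volume.restrict Ω),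
      ∀ᵐ x ∂(volume.restrict Ω), F t u x = f t x (u x))
    -- Landesman–Lazer type condition (LL≠)
    (hLL : ∀ u : Lp ℝ 2 (volume.restrict Ω), u ∈ N → ‖u‖ = 1 →
      (∫ t in (0:ℝ)..T, ∫ x in {x | 0 < u x}, fp t x * u x ∂(volume.restrict Ω)) +
      (∫ t in (0:ℝ)..T, ∫ x in {x | u x < 0}, fm t x * u x ∂(volume.restrict Ω))
        ≠ 0) :
    ∃ R₀ : ℝ, 0 < R₀ ∧
      ∀ u : Lp ℝ 2 (volume.restrict Ω), u ∈ N → R₀ ≤ ‖u‖ →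
        (∫ t in (0:ℝ)..T, P (F t u)) ≠ 0 :=
  statement13_general n Ω hΩo hΩb T hT N hNfin P hPorth f hfc m hfa fp fm hfpc hfmc hfp hfm F hF hLL
end

section
/- Let Ω⊆ℝⁿ be an open bounded set, X = L²(Ω) (real), T>0, N a finite-dimensional subspace of X, and P:X→X the orthogonal projection onto N. Let f:[0,∞)×Ω×ℝ→ℝ be continuous satisfying conditions (a) and (d), let F be the associated Nemytskii operator, and define g:N→N by g(u) := ∫₀ᵀ P F(t,u) dt. If for every u∈N with ‖u‖=1 one has ∫₀ᵀ∫_{{u>0}} f₊(t,x)u(x) dx dt + ∫₀ᵀ∫_{{u<0}} f₋(t,x)u(x) dx dt > 0, then there exists R₀>0 such that ⟨g(u),u⟩ > 0 for every u∈N with ‖u‖≥R₀. -/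
open MeasureTheory Set Filter Topology
open scoped RealInnerProductSpace ENNReal

/-!
Suppose `⟪g uₖ, uₖ⟫ ≤ 0` along a sequence `uₖ ∈ N` with `‖uₖ‖ → ∞`. Since `x - P x ⊥ N`,
`⟪g u, u⟫ = ∫₀ᵀ ⟪F(t,u), u⟫ dt` for `u ∈ N`. The unit sphere of `N` is compact, so after passing
to a subsequence `vₖ = uₖ / ‖uₖ‖` converges to some `c` with `‖c‖ = 1`, both in `L²` and a.e.
Where `c(x) > 0` (resp. `< 0`) we get `uₖ(x) → +∞` (resp. `-∞`), hence `f(t,x,uₖ(x)) → f₊(t,x)`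
(resp. `f₋(t,x)`); as `f` is bounded, dominated convergence in `x` and then in `t` shows that
`⟪g uₖ, vₖ⟫` tends to the Landesman–Lazer integral of `c`, which is positive: a contradiction.
-/

section Hilbert

variable {E : Type*} [NormedAddCommGroup E] [InnerProductSpace ℝ E]

theorem tendsto_inner_of_norm_le {ι : Type*} {l : Filter ι} {G v : ι → E} {c : E} {C L : ℝ}
    (hG : ∀ i, ‖G i‖ ≤ C) (hv : Tendsto v l (𝓝 c))
    (hc : Tendsto (fun i => ⟪G i, c⟫) l (𝓝 L)) :
    Tendsto (fun i => ⟪G i, v i⟫) l (𝓝 L) := by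
  have hsmall : Tendsto (fun i => ⟪G i, v i - c⟫) l (𝓝 0) :=
    squeeze_zero_norm
      (fun i => (norm_inner_le_norm _ _).trans (mul_le_mul_of_nonneg_right (hG i) (norm_nonneg _)))
      (by simpa using (tendsto_iff_norm_sub_tendsto_zero.1 hv).const_mul C)
  simpa [inner_sub_right] using hc.add hsmall

theorem inner_intervalIntegral_proj [CompleteSpace E] {N : Submodule ℝ E} (P : E →L[ℝ] E)
    (hP : ∀ x, ∀ y ∈ N, ⟪x - P x, y⟫ = 0) {G : ℝ → E} {a b : ℝ}
    (hG : IntervalIntegrable (fun t => P (G t)) volume a b) {u : E} (hu : u ∈ N) :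
    ⟪∫ t in a..b, P (G t), u⟫ = ∫ t in a..b, ⟪G t, u⟫ := by
  rw [real_inner_comm]
  refine ((innerSL ℝ u).intervalIntegral_comp_comm hG).symm.trans
    (intervalIntegral.integral_congr fun t _ => ?_)
  have h := hP (G t) u hu
  rw [inner_sub_left, sub_eq_zero] at h
  simp [real_inner_comm, h]

end Hilbert

theorem tendsto_comp_mul_mul_of_atTop_atBot {ι : Type*} {l : Filter ι} {φ : ℝ → ℝ} {a b : ℝ}
    (ha : Tendsto φ atTop (𝓝 a)) (hb : Tendsto φ atBot (𝓝 b)) {r w : ι → ℝ} {w₀ : ℝ}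
    (hr : Tendsto r l atTop) (hw : Tendsto w l (𝓝 w₀)) :
    Tendsto (fun i => φ (r i * w i) * w₀) l
      (𝓝 ((if 0 < w₀ then a * w₀ else 0) + if w₀ < 0 then b * w₀ else 0)) := by
  rcases lt_trichotomy w₀ 0 with hneg | rfl | hpos
  · simpa [hneg, hneg.not_gt] using (hb.comp (hr.atTop_mul_neg hneg hw)).mul_const w₀
  · simpa using tendsto_const_nhds
  · simpa [hpos, hpos.not_gt] using (ha.comp (hr.atTop_mul_pos hpos hw)).mul_const w₀

namespace MeasureTheory

namespace L2

variable {α : Type*} [MeasurableSpace α] {μ : Measure α}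

theorem real_inner_eq_integral_mul (a b : Lp ℝ 2 μ) : ⟪a, b⟫ = ∫ x, a x * b x ∂μ := by
  simp [inner_def, mul_comm]

theorem norm_sq_eq_integral (a : Lp ℝ 2 μ) : ‖a‖ ^ 2 = ∫ x, a x ^ 2 ∂μ := by
  rw [← real_inner_self_eq_norm_sq, real_inner_eq_integral_mul]
  simp only [sq]

theorem continuousOn_of_ae_abs_le [IsFiniteMeasure μ] {X : Type*} [TopologicalSpace X]
    [FirstCountableTopology X] {G : X → Lp ℝ 2 μ} {g : X → α → ℝ} {s : Set X} {C : ℝ}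
    (hG : ∀ b ∈ s, G b =ᵐ[μ] g b) (hbound : ∀ b ∈ s, ∀ᵐ x ∂μ, |g b x| ≤ C)
    (hcont : ∀ᵐ x ∂μ, ContinuousOn (fun b => g b x) s) : ContinuousOn G s := by
  intro b₀ hb₀
  have hsq : ContinuousWithinAt (fun b => ∫ x, (g b x - g b₀ x) ^ 2 ∂μ) s b₀ := by
    refine continuousWithinAt_of_dominated (bound := fun _ => (2 * C) ^ 2) ?_ ?_
      (integrable_const _) ?_
    · filter_upwards [self_mem_nhdsWithin] with b hb
      exact (((Lp.aestronglyMeasurable _).congr (hG b hb)).sub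
        ((Lp.aestronglyMeasurable _).congr (hG b₀ hb₀))).pow 2
    · filter_upwards [self_mem_nhdsWithin] with b hb
      filter_upwards [hbound b hb, hbound b₀ hb₀] with x h h₀
      rw [norm_pow, Real.norm_eq_abs]
      exact pow_le_pow_left₀ (abs_nonneg _) ((abs_sub _ _).trans (by linarith)) 2
    · filter_upwards [hcont] with x hx
      exact ((hx b₀ hb₀).sub continuousWithinAt_const).pow 2
  have hnorm : ∀ b ∈ s, ‖G b - G b₀‖ = √(∫ x, (g b x - g b₀ x) ^ 2 ∂μ) := fun b hb => by
    have hae : (fun x => (g b x - g b₀ x) ^ 2) =ᵐ[μ] fun x => (G b - G b₀) x ^ 2 := by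
      filter_upwards [hG b hb, hG b₀ hb₀, Lp.coeFn_sub (G b) (G b₀)] with x h h₀ hsub
      rw [hsub, Pi.sub_apply, h, h₀]
    rw [integral_congr_ae hae, ← norm_sq_eq_integral, Real.sqrt_sq (norm_nonneg _)]
  have hlim : Tendsto (fun b => √(∫ x, (g b x - g b₀ x) ^ 2 ∂μ)) (𝓝[s] b₀) (𝓝 0) := by
    simpa using hsq.sqrt.tendsto
  rw [ContinuousWithinAt, tendsto_iff_norm_sub_tendsto_zero]
  exact hlim.congr' (eventually_nhdsWithin_of_forall fun b hb => (hnorm b hb).symm)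

end L2

theorem Lp.exists_subseq_normalize_tendsto {α E : Type*} [MeasurableSpace α]
    {μ : Measure α} [NormedAddCommGroup E] [NormedSpace ℝ E] {p : ℝ≥0∞} [Fact (1 ≤ p)]
    (N : Submodule ℝ (Lp E p μ)) [FiniteDimensional ℝ N] {u : ℕ → Lp E p μ}
    (huN : ∀ k, u k ∈ N) (hu : ∀ k, u k ≠ 0) :
    ∃ c ∈ N, ‖c‖ = 1 ∧ ∃ σ : ℕ → ℕ, StrictMono σ ∧
      Tendsto (fun k => ‖u (σ k)‖⁻¹ • u (σ k)) atTop (𝓝 c) ∧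
      ∀ᵐ x ∂μ, Tendsto (fun k => (‖u (σ k)‖⁻¹ • u (σ k) : Lp E p μ) x) atTop (𝓝 (c x)) := by
  obtain ⟨c, hc, φ, hφ, hlim⟩ := (isCompact_sphere (0 : N) 1).tendsto_subseq
    (x := fun k => ⟨‖u k‖⁻¹ • u k, N.smul_mem _ (huN k)⟩)
    (fun k => by simp [norm_smul, hu k])
  have hlim' := (continuous_subtype_val.tendsto c).comp hlim
  obtain ⟨ψ, hψ, hae⟩ := (tendstoInMeasure_of_tendsto_Lp hlim').exists_seq_tendsto_ae
  exact ⟨c, c.2, by simpa using hc, φ ∘ ψ, hφ.comp hψ, hlim'.comp hψ.tendsto_atTop, hae⟩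

section Nemytskii

variable {α : Type*} [MeasurableSpace α] {μ : Measure α}

theorem continuousOn_setIntegral_mul {X : Type*} [TopologicalSpace X] [FirstCountableTopology X]
    {g : X → α → ℝ} {s : Set X} {m : ℝ} (hg : ∀ t ∈ s, AEStronglyMeasurable (g t) μ)
    (hgb : ∀ t ∈ s, ∀ᵐ x ∂μ, |g t x| ≤ m) (hgc : ∀ᵐ x ∂μ, ContinuousOn (fun t => g t x) s)
    {a : α → ℝ} (ha : Integrable a μ) (S : Set α) :
    ContinuousOn (fun t => ∫ x in S, g t x * a x ∂μ) s := by
  refine continuousOn_of_dominated (bound := fun x => m * |a x|)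
    (fun t ht => ((hg t ht).mul ha.1).restrict) (fun t ht => ae_restrict_of_ae ?_)
    (ha.abs.const_mul m).restrict (ae_restrict_of_ae ?_)
  · filter_upwards [hgb t ht] with x hx
    rw [norm_mul, Real.norm_eq_abs, Real.norm_eq_abs]
    exact mul_le_mul_of_nonneg_right hx (abs_nonneg _)
  · filter_upwards [hgc] with x hx
    exact hx.mul continuousOn_const

variable [IsFiniteMeasure μ]

theorem tendsto_inner_of_ae_eq_comp_mul {φ : α → ℝ → ℝ} {a b : α → ℝ} {m : ℝ} (hm : 0 ≤ m)
    (hφ : ∀ᵐ x ∂μ, ∀ y, |φ x y| ≤ m) (ha : ∀ᵐ x ∂μ, Tendsto (φ x) atTop (𝓝 (a x)))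
    (hb : ∀ᵐ x ∂μ, Tendsto (φ x) atBot (𝓝 (b x)))
    (ha_meas : AEStronglyMeasurable a μ) (hb_meas : AEStronglyMeasurable b μ)
    {G v : ℕ → Lp ℝ 2 μ} {r : ℕ → ℝ} {c : Lp ℝ 2 μ}
    (hG : ∀ k, G k =ᵐ[μ] fun x => φ x (r k * v k x)) (hr : Tendsto r atTop atTop)
    (hv : Tendsto v atTop (𝓝 c)) (hvae : ∀ᵐ x ∂μ, Tendsto (fun k => v k x) atTop (𝓝 (c x))) :
    Tendsto (fun k => ⟪G k, v k⟫) atTop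
      (𝓝 ((∫ x in {x | 0 < c x}, a x * c x ∂μ) + ∫ x in {x | c x < 0}, b x * c x ∂μ)) := by
  have hc : Integrable c μ := (Lp.memLp c).integrable one_le_two
  have hcm := (Lp.stronglyMeasurable c).measurable
  have hab : ∀ᵐ x ∂μ, |a x| ≤ m ∧ |b x| ≤ m := by
    filter_upwards [hφ, ha, hb] with x hx hax hbx
    exact ⟨le_of_tendsto' hax.abs hx, le_of_tendsto' hbx.abs hx⟩
  have hint {d : α → ℝ} (hd : AEStronglyMeasurable d μ) (hdb : ∀ᵐ x ∂μ, |d x| ≤ m) :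
      Integrable (fun x => d x * c x) μ := by
    refine (hc.abs.const_mul m).mono' (hd.mul hc.1) ?_
    filter_upwards [hdb] with x hx
    rw [norm_mul, Real.norm_eq_abs, Real.norm_eq_abs]
    exact mul_le_mul_of_nonneg_right hx (abs_nonneg _)
  have hsplit : ∫ x, ((if 0 < c x then a x * c x else 0) + if c x < 0 then b x * c x else 0) ∂μ =
      (∫ x in {x | 0 < c x}, a x * c x ∂μ) + ∫ x in {x | c x < 0}, b x * c x ∂μ := by
    rw [← integral_indicator (measurableSet_lt measurable_const hcm),
      ← integral_indicator (measurableSet_lt hcm measurable_const), ← integral_add]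
    · rfl
    · exact (hint ha_meas (hab.mono fun x hx => hx.1)).indicator
        (measurableSet_lt measurable_const hcm)
    · exact (hint hb_meas (hab.mono fun x hx => hx.2)).indicator
        (measurableSet_lt hcm measurable_const)
  refine tendsto_inner_of_norm_le (fun k => Lp.norm_le_of_ae_bound hm ?_) hv ?_
  · filter_upwards [hG k, hφ] with x hx hxm
    rw [hx, Real.norm_eq_abs]
    exact hxm _
  rw [← hsplit]
  simp_rw [L2.real_inner_eq_integral_mul]
  refine tendsto_integral_of_dominated_convergence (fun x => m * |c x|)
    (fun k => (Lp.aestronglyMeasurable _).mul hc.1) (hc.abs.const_mul m) (fun k => ?_) ?_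
  · filter_upwards [hG k, hφ] with x hx hxm
    rw [norm_mul, Real.norm_eq_abs, Real.norm_eq_abs, hx]
    exact mul_le_mul_of_nonneg_right (hxm _) (abs_nonneg _)
  · filter_upwards [ae_all_iff.2 hG, ha, hb, hvae] with x hx hax hbx hvx
    simp_rw [hx]
    exact tendsto_comp_mul_mul_of_atTop_atBot hax hbx hr hvx

theorem tendsto_intervalIntegral_inner_nemytskii {f : ℝ → α → ℝ → ℝ} {fp fm : ℝ → α → ℝ}
    {F : ℝ → Lp ℝ 2 μ → Lp ℝ 2 μ} {T m : ℝ} (hT : 0 ≤ T) (hm : 0 ≤ m)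
    (hF : ∀ t, 0 ≤ t → ∀ u, F t u =ᵐ[μ] fun x => f t x (u x))
    (hFc : ∀ u, ContinuousOn (fun t => F t u) (Ici 0))
    (hfa : ∀ t, 0 ≤ t → ∀ᵐ x ∂μ, ∀ y, |f t x y| ≤ m)
    (hfp : ∀ t, 0 ≤ t → ∀ᵐ x ∂μ, Tendsto (f t x) atTop (𝓝 (fp t x)))
    (hfm : ∀ t, 0 ≤ t → ∀ᵐ x ∂μ, Tendsto (f t x) atBot (𝓝 (fm t x)))
    (hfp_meas : ∀ t, 0 ≤ t → AEStronglyMeasurable (fp t) μ)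
    (hfm_meas : ∀ t, 0 ≤ t → AEStronglyMeasurable (fm t) μ)
    (hfpc : ∀ᵐ x ∂μ, ContinuousOn (fun t => fp t x) (Ici 0))
    (hfmc : ∀ᵐ x ∂μ, ContinuousOn (fun t => fm t x) (Ici 0))
    {u v : ℕ → Lp ℝ 2 μ} {r : ℕ → ℝ} {c : Lp ℝ 2 μ} (huv : ∀ k, u k = r k • v k)
    (hr : Tendsto r atTop atTop) (hv : Tendsto v atTop (𝓝 c))
    (hvae : ∀ᵐ x ∂μ, Tendsto (fun k => v k x) atTop (𝓝 (c x))) :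
    Tendsto (fun k => ∫ t in (0:ℝ)..T, ⟪F t (u k), v k⟫) atTop
      (𝓝 ((∫ t in (0:ℝ)..T, ∫ x in {x | 0 < c x}, fp t x * c x ∂μ) +
        ∫ t in (0:ℝ)..T, ∫ x in {x | c x < 0}, fm t x * c x ∂μ)) := by
  set C := (measureUnivNNReal μ : ℝ) ^ (2 : ℝ≥0∞).toReal⁻¹ * m
  have hFb : ∀ t, 0 ≤ t → ∀ u, ‖F t u‖ ≤ C := fun t ht u => by
    refine Lp.norm_le_of_ae_bound hm ?_
    filter_upwards [hF t ht u, hfa t ht] with x hx hxm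
    rw [hx, Real.norm_eq_abs]
    exact hxm _
  have hlim_abs {g : ℝ → α → ℝ} {l : Filter ℝ} [l.NeBot]
      (hg : ∀ t, 0 ≤ t → ∀ᵐ x ∂μ, Tendsto (f t x) l (𝓝 (g t x))) :
      ∀ t ∈ Ici (0 : ℝ), ∀ᵐ x ∂μ, |g t x| ≤ m := fun t ht => by
    filter_upwards [hfa t ht, hg t ht] with x hx hgx
    exact le_of_tendsto' hgx.abs hx
  have hsplit : IntervalIntegrable (fun t => ∫ x in {x | 0 < c x}, fp t x * c x ∂μ) volume 0 T ∧
      IntervalIntegrable (fun t => ∫ x in {x | c x < 0}, fm t x * c x ∂μ) volume 0 T := by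
    have hc : Integrable c μ := (Lp.memLp c).integrable one_le_two
    have hIcc : uIcc 0 T ⊆ Ici 0 := by simp [uIcc_of_le hT, Icc_subset_Ici_self]
    exact ⟨((continuousOn_setIntegral_mul hfp_meas (hlim_abs hfp) hfpc hc _).mono
      hIcc).intervalIntegrable, ((continuousOn_setIntegral_mul hfm_meas (hlim_abs hfm) hfmc hc
      _).mono hIcc).intervalIntegrable⟩
  rw [← intervalIntegral.integral_add hsplit.1 hsplit.2]
  have hv_bdd : ∀ᶠ k in atTop, ‖v k‖ ≤ ‖c‖ + 1 :=
    hv.norm.eventually (eventually_le_nhds (lt_add_one _))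
  refine intervalIntegral.tendsto_integral_filter_of_dominated_convergence (fun _ => C * (‖c‖ + 1))
    (Eventually.of_forall fun k => ?_) (hv_bdd.mono fun k hk => ?_) intervalIntegrable_const ?_
  · rw [uIoc_of_le hT]
    exact (((hFc (u k)).inner continuousOn_const).mono
      (Ioc_subset_Icc_self.trans Icc_subset_Ici_self)).aestronglyMeasurable measurableSet_Ioc
  · refine Eventually.of_forall fun t ht => (norm_inner_le_norm _ _).trans ?_
    rw [uIoc_of_le hT] at ht
    exact mul_le_mul (hFb t ht.1.le _) hk (norm_nonneg _) ((norm_nonneg _).trans (hFb 0 le_rfl 0))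
  · refine Eventually.of_forall fun t ht => ?_
    rw [uIoc_of_le hT] at ht
    have ht0 : 0 ≤ t := ht.1.le
    refine tendsto_inner_of_ae_eq_comp_mul hm (hfa t ht0) (hfp t ht0) (hfm t ht0)
      (hfp_meas t ht0) (hfm_meas t ht0) (fun k => ?_) hr hv hvae
    filter_upwards [hF t ht0 (u k), Lp.coeFn_smul (r k) (v k)] with x hx hsmul
    rw [hx, huv k, hsmul, Pi.smul_apply, smul_eq_mul]

end Nemytskii

end MeasureTheory

theorem statement14_general
    (n : ℕ) (Ω : Set (EuclideanSpace ℝ (Fin n)))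
    (hΩo : IsOpen Ω) (hΩb : Bornology.IsBounded Ω)
    (T : ℝ) (hT : 0 < T)
    (N : Submodule ℝ (Lp ℝ 2 (volume.restrict Ω)))
    (hNfin : FiniteDimensional ℝ ↥N)
    -- `P` is the orthogonal projection onto `N`
    (P : Lp ℝ 2 (volume.restrict Ω) →L[ℝ] Lp ℝ 2 (volume.restrict Ω))
    (hPorth : ∀ x : Lp ℝ 2 (volume.restrict Ω), ∀ y ∈ N, ⟪x - P x, y⟫ = (0:ℝ))
    (f : ℝ → EuclideanSpace ℝ (Fin n) → ℝ → ℝ)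
    (hfc : ContinuousOn (fun p : ℝ × EuclideanSpace ℝ (Fin n) × ℝ =>
      f p.1 p.2.1 p.2.2) (Set.Ici (0:ℝ) ×ˢ Ω ×ˢ Set.univ))
    -- condition (a): boundedness
    (m : ℝ) (hm : 0 < m)
    (hfa : ∀ t : ℝ, 0 ≤ t → ∀ x ∈ Ω, ∀ y : ℝ, |f t x y| ≤ m)
    -- condition (d): limits at ±∞
    (fp fm : ℝ → EuclideanSpace ℝ (Fin n) → ℝ)
    (hfpc : ContinuousOn (fun p : ℝ × EuclideanSpace ℝ (Fin n) => fp p.1 p.2)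
      (Set.Ici (0:ℝ) ×ˢ Ω))
    (hfmc : ContinuousOn (fun p : ℝ × EuclideanSpace ℝ (Fin n) => fm p.1 p.2)
      (Set.Ici (0:ℝ) ×ˢ Ω))
    (hfp : ∀ t : ℝ, 0 ≤ t → ∀ x ∈ Ω,
      Filter.Tendsto (fun y => f t x y) Filter.atTop (nhds (fp t x)))
    (hfm : ∀ t : ℝ, 0 ≤ t → ∀ x ∈ Ω,
      Filter.Tendsto (fun y => f t x y) Filter.atBot (nhds (fm t x)))
    -- `F` is the Nemytskii operator associated with `f`
    (F : ℝ → Lp ℝ 2 (volume.restrict Ω) → Lp ℝ 2 (volume.restrict Ω))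
    (hF : ∀ t : ℝ, 0 ≤ t → ∀ u : Lp ℝ 2 (volume.restrict Ω),
      ∀ᵐ x ∂(volume.restrict Ω), F t u x = f t x (u x))
    -- Landesman–Lazer type condition (LL+)
    (hLL : ∀ u : Lp ℝ 2 (volume.restrict Ω), u ∈ N → ‖u‖ = 1 →
      0 < (∫ t in (0:ℝ)..T, ∫ x in {x | 0 < u x}, fp t x * u x ∂(volume.restrict Ω)) +
        (∫ t in (0:ℝ)..T, ∫ x in {x | u x < 0}, fm t x * u x ∂(volume.restrict Ω))) :
    ∃ R₀ : ℝ, 0 < R₀ ∧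
      ∀ u : Lp ℝ 2 (volume.restrict Ω), u ∈ N → R₀ ≤ ‖u‖ →
        0 < ⟪∫ t in (0:ℝ)..T, P (F t u), u⟫ := by
  have : IsFiniteMeasure (volume.restrict Ω) := isFiniteMeasure_restrict.2 hΩb.measure_lt_top.ne
  have hΩ : ∀ᵐ x ∂(volume.restrict Ω), x ∈ Ω := ae_restrict_mem hΩo.measurableSet
  have hFc : ∀ u, ContinuousOn (fun t => F t u) (Ici 0) := fun u =>
    L2.continuousOn_of_ae_abs_le (g := fun t x => f t x (u x)) (fun t ht => hF t ht u)
      (fun t ht => hΩ.mono fun x hx => hfa t ht x hx _)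
      (hΩ.mono fun x hx =>
        hfc.uncurry_right (f := fun t q => f t q.1 q.2) (x, u x) (mk_mem_prod hx (mem_univ _)))
  have hPF : ∀ u, IntervalIntegrable (fun t => P (F t u)) volume 0 T := fun u =>
    (P.continuous.comp_continuousOn ((hFc u).mono (by
      simp [uIcc_of_le hT.le, Icc_subset_Ici_self]))).intervalIntegrable
  by_contra! hcon
  choose u huN hu_ge hu_nonpos using fun k : ℕ => hcon (k + 1) (by positivity)
  have hu_pos : ∀ k, 0 < ‖u k‖ := fun k => lt_of_lt_of_le (by positivity) (hu_ge k)
  obtain ⟨c, hcN, hc, σ, hσ, hv, hvae⟩ :=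
    Lp.exists_subseq_normalize_tendsto N huN fun k => norm_pos_iff.1 (hu_pos k)
  have hr : Tendsto (fun k => ‖u (σ k)‖) atTop atTop :=
    tendsto_atTop_mono (fun k => (Nat.cast_le.2 hσ.le_apply).trans
      ((le_add_of_nonneg_right zero_le_one).trans (hu_ge _))) tendsto_natCast_atTop_atTop
  have hlim := tendsto_intervalIntegral_inner_nemytskii hT.le hm.le hF hFc
    (fun t ht => hΩ.mono (hfa t ht)) (fun t ht => hΩ.mono (hfp t ht))
    (fun t ht => hΩ.mono (hfm t ht))
    (fun t ht => (hfpc.uncurry_left t ht).aestronglyMeasurable hΩo.measurableSet)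
    (fun t ht => (hfmc.uncurry_left t ht).aestronglyMeasurable hΩo.measurableSet)
    (hΩ.mono fun x hx => hfpc.uncurry_right x hx) (hΩ.mono fun x hx => hfmc.uncurry_right x hx)
    (fun k => (smul_inv_smul₀ (hu_pos _).ne' _).symm) hr hv hvae
  refine (hLL c hcN hc).not_ge (le_of_tendsto' hlim fun k => ?_)
  simp_rw [real_inner_smul_right, intervalIntegral.integral_const_mul,
    ← inner_intervalIntegral_proj P hPorth (hPF _) (huN _)]
  exact mul_nonpos_of_nonneg_of_nonpos (by positivity) (hu_nonpos _)

/-- under the Landesman–Lazer type condition (LL+), the averaged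
map `g(u) = ∫₀ᵀ P F(t,u) dt` satisfies `⟪g(u),u⟫ > 0` on `N` outside a large ball. -/
theorem statement14
    (n : ℕ) (Ω : Set (EuclideanSpace ℝ (Fin n)))
    (hΩo : IsOpen Ω) (hΩb : Bornology.IsBounded Ω)
    (T : ℝ) (hT : 0 < T)
    (N : Submodule ℝ (Lp ℝ 2 (volume.restrict Ω)))
    (hNfin : FiniteDimensional ℝ ↥N)
    -- `P` is the orthogonal projection onto `N`
    (P : Lp ℝ 2 (volume.restrict Ω) →L[ℝ] Lp ℝ 2 (volume.restrict Ω))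
    (hPmem : ∀ x : Lp ℝ 2 (volume.restrict Ω), P x ∈ N)
    (hPorth : ∀ x : Lp ℝ 2 (volume.restrict Ω), ∀ y ∈ N, ⟪x - P x, y⟫ = (0:ℝ))
    (f : ℝ → EuclideanSpace ℝ (Fin n) → ℝ → ℝ)
    (hfc : ContinuousOn (fun p : ℝ × EuclideanSpace ℝ (Fin n) × ℝ =>
      f p.1 p.2.1 p.2.2) (Set.Ici (0:ℝ) ×ˢ Ω ×ˢ Set.univ))
    -- condition (a): boundedness
    (m : ℝ) (hm : 0 < m)
    (hfa : ∀ t : ℝ, 0 ≤ t → ∀ x ∈ Ω, ∀ y : ℝ, |f t x y| ≤ m)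
    -- condition (d): limits at ±∞
    (fp fm : ℝ → EuclideanSpace ℝ (Fin n) → ℝ)
    (hfpc : ContinuousOn (fun p : ℝ × EuclideanSpace ℝ (Fin n) => fp p.1 p.2)
      (Set.Ici (0:ℝ) ×ˢ Ω))
    (hfmc : ContinuousOn (fun p : ℝ × EuclideanSpace ℝ (Fin n) => fm p.1 p.2)
      (Set.Ici (0:ℝ) ×ˢ Ω))
    (hfp : ∀ t : ℝ, 0 ≤ t → ∀ x ∈ Ω,
      Filter.Tendsto (fun y => f t x y) Filter.atTop (nhds (fp t x)))
    (hfm : ∀ t : ℝ, 0 ≤ t → ∀ x ∈ Ω,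
      Filter.Tendsto (fun y => f t x y) Filter.atBot (nhds (fm t x)))
    -- `F` is the Nemytskii operator associated with `f`
    (F : ℝ → Lp ℝ 2 (volume.restrict Ω) → Lp ℝ 2 (volume.restrict Ω))
    (hF : ∀ t : ℝ, 0 ≤ t → ∀ u : Lp ℝ 2 (volume.restrict Ω),
      ∀ᵐ x ∂(volume.restrict Ω), F t u x = f t x (u x))
    -- Landesman–Lazer type condition (LL+)
    (hLL : ∀ u : Lp ℝ 2 (volume.restrict Ω), u ∈ N → ‖u‖ = 1 →
      0 < (∫ t in (0:ℝ)..T, ∫ x in {x | 0 < u x}, fp t x * u x ∂(volume.restrict Ω)) +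
        (∫ t in (0:ℝ)..T, ∫ x in {x | u x < 0}, fm t x * u x ∂(volume.restrict Ω))) :
    ∃ R₀ : ℝ, 0 < R₀ ∧
      ∀ u : Lp ℝ 2 (volume.restrict Ω), u ∈ N → R₀ ≤ ‖u‖ →
        0 < ⟪∫ t in (0:ℝ)..T, P (F t u), u⟫ :=
  statement14_general n Ω hΩo hΩb T hT N hNfin P hPorth f hfc m hm hfa fp fm hfpc hfmc hfp hfm F hF
    hLL
end

section
/- Let X be a complex Banach space, T>0, and {S(t)}_{t≥0} a C0 semigroup on X. Let D⊆X be a linear subspace and A:D→X a linear map such that for every x∈D and t≥0: S(t)x∈D, A(S(t)x)=S(t)(Ax), and the map t↦S(t)x has (right) derivative −Ax at t=0. If {x∈D : Ax=0} = {x∈X : S(T)x=x}, then for every nonzero integer k there is no nonzero z∈D with Az = ((2kπ/T)·i)·z; that is, no number (2kπ/T)i with k∈ℤ, k≠0 is an eigenvalue of A. -/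
open Set Filter Topology

/-! An eigenvector `z` of `A` for the eigenvalue `μ` has orbit `S t z = exp (-μ t) • z`: the function
`t ↦ exp (μ t) • S t z` has vanishing right derivative, hence is constant. For `μ = 2kπi/T` this gives
`S T z = z`, so `z` lies in the kernel of `A` by hypothesis, and `μ • z = A z = 0` forces `z = 0`. -/

section

variable {X : Type*} [NormedAddCommGroup X] [NormedSpace ℂ X]

theorem eq_exp_smul_of_hasDerivWithinAt_Ici {g : ℝ → X} {μ : ℂ} (hcont : ContinuousOn g (Ici 0))
    (hderiv : ∀ t, 0 ≤ t → HasDerivWithinAt g (-(μ • g t)) (Ici t) t) {t : ℝ} (ht : 0 ≤ t) :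
    g t = Complex.exp (-(μ * t)) • g 0 := by
  set f : ℝ → X := fun s => Complex.exp (μ * s) • g s with hf
  have hexp : ∀ s : ℝ, HasDerivAt (fun s : ℝ => Complex.exp (μ * s)) (Complex.exp (μ * s) * μ) s :=
    fun s => ((hasDerivAt_id s).ofReal_comp.const_mul μ).cexp.congr_deriv (by simp)
  have hf' : ∀ s ∈ Ico 0 t, HasDerivWithinAt f 0 (Ici s) s := fun s hs => by
    have h := (hexp s).hasDerivWithinAt.smul (hderiv s hs.1)
    rwa [smul_neg, smul_smul, neg_add_cancel] at h
  have hfcont : ContinuousOn f (Icc 0 t) :=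
    (by fun_prop : Continuous fun s : ℝ => Complex.exp (μ * s)).continuousOn.smul
      (hcont.mono Icc_subset_Ici_self)
  have hconst := constant_of_has_deriv_right_zero hfcont hf' t ⟨ht, le_rfl⟩
  simp only [hf, Complex.ofReal_zero, mul_zero, Complex.exp_zero, one_smul] at hconst
  rw [← hconst, smul_smul, ← Complex.exp_add, neg_add_cancel, Complex.exp_zero, one_smul]

variable {S : ℝ → X →L[ℂ] X}

theorem hasDerivWithinAt_Ici_zero_of_tendsto (hS0 : S 0 = 1) {x v : X}
    (hx : Tendsto (fun h : ℝ => h⁻¹ • (S h x - x)) (𝓝[>] 0) (𝓝 v)) :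
    HasDerivWithinAt (fun t => S t x) v (Ici 0) 0 := by
  rw [← hasDerivWithinAt_Ioi_iff_Ici, hasDerivWithinAt_iff_tendsto_slope' self_notMem_Ioi]
  refine hx.congr fun h => ?_
  simp [slope_def_module, hS0]

theorem hasDerivWithinAt_Ici_of_hasDerivWithinAt_Ici_zero
    (hSadd : ∀ t s : ℝ, 0 ≤ t → 0 ≤ s → S (t + s) = (S t).comp (S s))
    {x v : X} {t : ℝ} (ht : 0 ≤ t)
    (hv : HasDerivWithinAt (fun s => S s (S t x)) v (Ici 0) 0) :
    HasDerivWithinAt (fun s => S s x) v (Ici t) t := by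
  have hshift : HasDerivWithinAt (fun s => S (s - t) (S t x)) v (Ici t) t := by
    have hv' : HasDerivWithinAt (fun s => S s (S t x)) v (Ici 0) (t - t) := by rwa [sub_self]
    simpa [Function.comp_def] using HasDerivWithinAt.scomp (h := fun s : ℝ => s - t) (s := Ici t)
      t hv' ((hasDerivAt_id' t).sub_const t).hasDerivWithinAt
      fun s hs => sub_nonneg.mpr (mem_Ici.mp hs)
  refine hshift.congr_of_mem (fun s (hs : t ≤ s) => ?_) self_mem_Ici
  simp [← ContinuousLinearMap.comp_apply, ← hSadd _ _ (sub_nonneg.mpr hs) ht]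

theorem hasDerivWithinAt_Ici_orbit_of_eigenvector (hS0 : S 0 = 1)
    (hSadd : ∀ t s : ℝ, 0 ≤ t → 0 ≤ s → S (t + s) = (S t).comp (S s))
    {D : Submodule ℂ X} {A : X →ₗ[ℂ] X}
    (hDinv : ∀ x ∈ D, ∀ t : ℝ, 0 ≤ t → S t x ∈ D)
    (hAS : ∀ x ∈ D, ∀ t : ℝ, 0 ≤ t → A (S t x) = S t (A x))
    (hgen : ∀ x ∈ D, Tendsto (fun h : ℝ => h⁻¹ • (S h x - x)) (𝓝[>] 0) (𝓝 (-(A x))))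
    {z : X} (hz : z ∈ D) {μ : ℂ} (hAz : A z = μ • z) {t : ℝ} (ht : 0 ≤ t) :
    HasDerivWithinAt (fun s => S s z) (-(μ • S t z)) (Ici t) t := by
  have hASt : A (S t z) = μ • S t z := by rw [hAS z hz t ht, hAz, map_smul]
  refine hasDerivWithinAt_Ici_of_hasDerivWithinAt_Ici_zero hSadd ht ?_
  rw [← hASt]
  exact hasDerivWithinAt_Ici_zero_of_tendsto hS0 (hgen _ (hDinv z hz t ht))

end

theorem statement18_general
    {X : Type*} [NormedAddCommGroup X] [NormedSpace ℂ X]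
    (T : ℝ) (hT : 0 < T)
    (S : ℝ → X →L[ℂ] X)
    (hS0 : S 0 = 1)
    (hSadd : ∀ t s : ℝ, 0 ≤ t → 0 ≤ s → S (t + s) = (S t).comp (S s))
    (hScont : ∀ x : X, ContinuousOn (fun t => S t x) (Set.Ici (0:ℝ)))
    (D : Submodule ℂ X) (A : X →ₗ[ℂ] X)
    (hDinv : ∀ x ∈ D, ∀ t : ℝ, 0 ≤ t → S t x ∈ D)
    (hAS : ∀ x ∈ D, ∀ t : ℝ, 0 ≤ t → A (S t x) = S t (A x))
    (hgen : ∀ x ∈ D, Filter.Tendsto (fun h : ℝ => h⁻¹ • (S h x - x))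
      (nhdsWithin 0 (Set.Ioi 0)) (nhds (-(A x))))
    (hker : ∀ x : X, (x ∈ D ∧ A x = 0) ↔ S T x = x) :
    ∀ k : ℤ, k ≠ 0 → ∀ z ∈ D,
      A z = (((2 * (k : ℂ) * Real.pi / (T : ℂ)) * Complex.I) : ℂ) • z → z = 0 := by
  intro k hk z hz hAz
  set μ : ℂ := 2 * k * Real.pi / T * Complex.I
  have hμT : μ * T = k * (2 * Real.pi * Complex.I) := by
    simp only [μ]
    field_simp [Complex.ofReal_ne_zero.mpr hT.ne']
  have hST : S T z = z := by
    rw [eq_exp_smul_of_hasDerivWithinAt_Ici (hScont z)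
      (fun t ht => hasDerivWithinAt_Ici_orbit_of_eigenvector hS0 hSadd hDinv hAS hgen hz hAz ht) hT.le,
      hμT, Complex.exp_neg, Complex.exp_int_mul_two_pi_mul_I, inv_one, one_smul, hS0,
      one_apply_eq_self]
  have hμ : μ ≠ 0 := by
    simp [μ, hk, Real.pi_ne_zero, hT.ne']
  have hμz : μ • z = 0 := hAz ▸ ((hker z).mpr hST).2
  exact (smul_eq_zero.mp hμz).resolve_left hμ

/-- if the kernel of (the restriction to `D` of) the operator `A`
(where `-A` generates the `C₀` semigroup `S`, encoded by invariance of `D`,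
commutation with `S(t)` and the right-derivative property at `0`) coincides with
the fixed point set of `S(T)`, then no number `(2kπ/T)i` with `k ∈ ℤ, k ≠ 0` is
an eigenvalue of `A`. -/
theorem statement18
    {X : Type*} [NormedAddCommGroup X] [NormedSpace ℂ X] [CompleteSpace X]
    (T : ℝ) (hT : 0 < T)
    (S : ℝ → X →L[ℂ] X)
    (hS0 : S 0 = 1)
    (hSadd : ∀ t s : ℝ, 0 ≤ t → 0 ≤ s → S (t + s) = (S t).comp (S s))
    (hScont : ∀ x : X, ContinuousOn (fun t => S t x) (Set.Ici (0:ℝ)))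
    (D : Submodule ℂ X) (A : X →ₗ[ℂ] X)
    (hDinv : ∀ x ∈ D, ∀ t : ℝ, 0 ≤ t → S t x ∈ D)
    (hAS : ∀ x ∈ D, ∀ t : ℝ, 0 ≤ t → A (S t x) = S t (A x))
    (hgen : ∀ x ∈ D, Filter.Tendsto (fun h : ℝ => h⁻¹ • (S h x - x))
      (nhdsWithin 0 (Set.Ioi 0)) (nhds (-(A x))))
    (hker : ∀ x : X, (x ∈ D ∧ A x = 0) ↔ S T x = x) :
    ∀ k : ℤ, k ≠ 0 → ∀ z ∈ D,
      A z = (((2 * (k : ℂ) * Real.pi / (T : ℂ)) * Complex.I) : ℂ) • z → z = 0 :=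
  statement18_general T hT S hS0 hSadd hScont D A hDinv hAS hgen hker
end
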